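/- arXiv:1605.02421 — 7 statements merged into one kernel-verified Lean document; each statement's English description precedes it below -/
import Mathlib

section
/- Let φ : [0,1] → ℝ be continuous and define f(t) = f_0(0) + ∫_0^t [f_0′(u) + r(u)(Y(u) cos(2πφ(u)) + Z(u) sin(2πφ(u)))] du for t ∈ [0,1]. Then f is a C¹ curve and ‖f′(u)‖² = g(u) for every u ∈ [0,1]; i.e., f is isometric for the metric g·du² on [0,1]. -/
open MeasureTheory Real Topology Filter

/-- Starting from a strictly short smooth curve `f0 : [0,1] → ℝ³` with
Frenet-type orthonormal frame `(f0'/(‖f0'‖), Y, Z)`, for any continuous phase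
`φ : [0,1] → ℝ`, the curve
`f t = f0 0 + ∫_0^t (f0' u + r u • (cos (2πφ u) • Y u + sin (2πφ u) • Z u)) du`
is a `C¹` curve which is isometric for the metric `g·du²`, i.e. `‖f' u‖² = g u` on `[0,1]`. -/
theorem nash_twist_general_phase_is_isometric
    (g : ℝ → ℝ) (hg : ContDiffOn ℝ (⊤ : ℕ∞) g (Set.Icc 0 1))
    (hgpos : ∀ u ∈ Set.Icc (0:ℝ) 1, 0 < g u)
    (f0 f0' : ℝ → EuclideanSpace ℝ (Fin 3))
    (hf0 : ContDiffOn ℝ (⊤ : ℕ∞) f0 (Set.Icc 0 1))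
    (hf0' : ∀ u ∈ Set.Icc (0:ℝ) 1, HasDerivWithinAt f0 (f0' u) (Set.Icc 0 1) u)
    (hf0'cont : ContinuousOn f0' (Set.Icc 0 1))
    (hshort : ∀ u ∈ Set.Icc (0:ℝ) 1, 0 < ‖f0' u‖ ∧ ‖f0' u‖ < Real.sqrt (g u))
    (r : ℝ → ℝ) (hr : ∀ u, r u = Real.sqrt (g u - ‖f0' u‖ ^ 2))
    (Y Z : ℝ → EuclideanSpace ℝ (Fin 3))
    (hY : ContDiffOn ℝ (⊤ : ℕ∞) Y (Set.Icc 0 1)) (hZ : ContDiffOn ℝ (⊤ : ℕ∞) Z (Set.Icc 0 1))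
    (honb : ∀ u ∈ Set.Icc (0:ℝ) 1,
      ‖Y u‖ = 1 ∧ ‖Z u‖ = 1 ∧ inner ℝ (Y u) (Z u) = (0:ℝ) ∧
      inner ℝ (f0' u) (Y u) = (0:ℝ) ∧ inner ℝ (f0' u) (Z u) = (0:ℝ))
    (φ : ℝ → ℝ) (hφ : ContinuousOn φ (Set.Icc 0 1))
    (f : ℝ → EuclideanSpace ℝ (Fin 3))
    (hf : ∀ t : ℝ, f t = f0 0 + ∫ u in (0:ℝ)..t,
      (f0' u + r u • (Real.cos (2 * π * φ u) • Y u + Real.sin (2 * π * φ u) • Z u))) :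
    ∃ f' : ℝ → EuclideanSpace ℝ (Fin 3),
      ContinuousOn f' (Set.Icc 0 1) ∧
      (∀ t ∈ Set.Icc (0:ℝ) 1, HasDerivWithinAt f (f' t) (Set.Icc 0 1) t) ∧
      (∀ t ∈ Set.Icc (0:ℝ) 1, ‖f' t‖ ^ 2 = g t) := by
  set F : ℝ → EuclideanSpace ℝ (Fin 3) := fun u =>
    f0' u + r u • (Real.cos (2 * π * φ u) • Y u + Real.sin (2 * π * φ u) • Z u) with hF
  -- continuity of F on [0,1]
  have hrcont : ContinuousOn r (Set.Icc 0 1) := by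
    have : ContinuousOn (fun u => Real.sqrt (g u - ‖f0' u‖ ^ 2)) (Set.Icc 0 1) :=
      Real.continuous_sqrt.comp_continuousOn
        ((hg.continuousOn).sub ((hf0'cont.norm).pow 2))
    exact this.congr fun u _ => hr u
  have hccont : ContinuousOn (fun u => Real.cos (2 * π * φ u)) (Set.Icc 0 1) :=
    Real.continuous_cos.comp_continuousOn (continuousOn_const.mul hφ)
  have hscont : ContinuousOn (fun u => Real.sin (2 * π * φ u)) (Set.Icc 0 1) :=
    Real.continuous_sin.comp_continuousOn (continuousOn_const.mul hφ)
  have hFcont : ContinuousOn F (Set.Icc 0 1) :=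
    hf0'cont.add (hrcont.smul ((hccont.smul hY.continuousOn).add
      (hscont.smul hZ.continuousOn)))
  have hInt : ∀ t ∈ Set.Icc (0:ℝ) 1, IntervalIntegrable F volume 0 t := by
    intro t ht
    refine (hFcont.mono ?_).intervalIntegrable
    rw [Set.uIcc_of_le ht.1]
    exact Set.Icc_subset_Icc le_rfl ht.2
  have hmeasIcc : AEStronglyMeasurable F (volume.restrict (Set.Icc (0:ℝ) 1)) :=
    hFcont.aestronglyMeasurable measurableSet_Icc
  have key : ∀ t ∈ Set.Icc (0:ℝ) 1,
      HasDerivWithinAt (fun u => ∫ x in (0:ℝ)..u, F x) (F t) (Set.Icc 0 1) t := by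
    intro t ht
    haveI : Fact (t ∈ Set.Icc (0:ℝ) 1) := ⟨ht⟩
    exact intervalIntegral.integral_hasDerivWithinAt_right (hInt t ht)
      ⟨Set.Icc 0 1, self_mem_nhdsWithin, hmeasIcc⟩ (hFcont t ht)
  refine ⟨F, hFcont, ?_, ?_⟩
  · intro t ht
    have hfeq : f = fun t => f0 0 + ∫ x in (0:ℝ)..t, F x := funext fun t => hf t
    rw [hfeq]
    exact (key t ht).const_add _
  · intro t ht
    obtain ⟨hY1, hZ1, hYZ, haY, haZ⟩ := honb t ht
    set c := Real.cos (2 * π * φ t)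
    set s := Real.sin (2 * π * φ t)
    have hvnorm : ‖c • Y t + s • Z t‖ ^ 2 = 1 := by
      rw [norm_add_sq_real, norm_smul, norm_smul, real_inner_smul_left,
        real_inner_smul_right, hYZ, hY1, hZ1]
      simp [Real.norm_eq_abs, mul_pow, sq_abs]
      rw [add_comm]
      exact Real.sin_sq_add_cos_sq _
    have hortho : inner ℝ (f0' t) (r t • (c • Y t + s • Z t)) = (0:ℝ) := by
      rw [real_inner_smul_right, inner_add_right, real_inner_smul_right,
        real_inner_smul_right, haY, haZ]
      ring
    have hg2 : ‖f0' t‖ ^ 2 ≤ g t := by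
      have h := (hshort t ht).2
      have := Real.sq_sqrt (hgpos t ht).le
      nlinarith [norm_nonneg (f0' t), Real.sqrt_nonneg (g t)]
    have hr2 : (r t) ^ 2 = g t - ‖f0' t‖ ^ 2 := by
      rw [hr t]; exact Real.sq_sqrt (by linarith)
    have : ‖F t‖ ^ 2 = ‖f0' t‖ ^ 2 + (r t) ^ 2 := by
      rw [hF]
      simp only
      rw [norm_add_sq_real, hortho, norm_smul, mul_pow, Real.norm_eq_abs, sq_abs,
        hvnorm]
      ring
    rw [this, hr2]
    ring
end

section
/- Define the deterministic Nash twist f_n(t) = f_0(0) + ∫_0^t [f_0′(u) + r(u)(Y(u) cos(2πnu) + Z(u) sin(2πnu))] du. Then there is a constant C, depending only on the sup norms of r, Y, Z and of their first derivatives, such that sup_{t∈[0,1]} ‖f_n(t) − f_0(t)‖ ≤ C/n for every positive integer n. -/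
open MeasureTheory Real

lemma osc_bound {E : Type*} [NormedAddCommGroup E] [NormedSpace ℝ E] [CompleteSpace E]
    (V V' : ℝ → E)
    (hVd : ∀ u ∈ Set.Ioo (0:ℝ) 1, HasDerivAt V (V' u) u)
    (hVc : ContinuousOn V (Set.Icc 0 1)) (hV'c : ContinuousOn V' (Set.Icc 0 1))
    (M : ℝ) (hM : ∀ u ∈ Set.Icc (0:ℝ) 1, ‖V u‖ ≤ M ∧ ‖V' u‖ ≤ M)
    (n : ℕ) (hn : 1 ≤ n) (θ t : ℝ) (ht : t ∈ Set.Icc (0:ℝ) 1) :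
    ‖∫ u in (0:ℝ)..t, Real.cos (2*π*n*u + θ) • V u‖ ≤ 3*M/(2*π*n) := by
  have hπ := Real.pi_pos
  have hn0 : (0:ℝ) < n := by exact_mod_cast hn
  set c : ℝ := 2*π*n with hc
  have hc0 : 0 < c := by positivity
  have hM0 : 0 ≤ M := le_trans (norm_nonneg _) (hM 0 (by norm_num)).1
  have hsub : Set.Icc (0:ℝ) t ⊆ Set.Icc 0 1 := Set.Icc_subset_Icc le_rfl ht.2
  have hsub' : Set.uIcc (0:ℝ) t ⊆ Set.Icc 0 1 := by
    rw [Set.uIcc_of_le ht.1]; exact hsub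
  set G : ℝ → E := fun u => (Real.sin (c*u + θ)/c) • V u with hGdef
  have hscont : Continuous fun u : ℝ => Real.sin (c*u + θ)/c := by
    exact (Real.continuous_sin.comp ((continuous_const.mul continuous_id).add
      continuous_const)).div_const c
  have hccont : Continuous fun u : ℝ => Real.cos (c*u + θ) := by
    exact Real.continuous_cos.comp ((continuous_const.mul continuous_id).add continuous_const)
  have hGd : ∀ u ∈ Set.Ioo (0:ℝ) t, HasDerivAt G
      (Real.cos (c*u + θ) • V u + (Real.sin (c*u + θ)/c) • V' u) u := by
    intro u hu
    have hu1 : u ∈ Set.Ioo (0:ℝ) 1 := ⟨hu.1, lt_of_lt_of_le hu.2 ht.2⟩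
    have hlin : HasDerivAt (fun u : ℝ => c*u + θ) c u := by
      simpa using ((hasDerivAt_id u).const_mul c).add_const θ
    have h1 : HasDerivAt (fun u => Real.sin (c*u + θ)/c) (Real.cos (c*u+θ)) u := by
      have h2 := ((Real.hasDerivAt_sin (c*u+θ)).comp u hlin).div_const c
      have : Real.cos (c*u+θ) * c / c = Real.cos (c*u+θ) := by
        field_simp
      rwa [this] at h2
    exact (h1.smul (hVd u hu1)).congr_deriv (add_comm _ _)
  have hintA : IntervalIntegrable (fun u => Real.cos (c*u + θ) • V u) volume 0 t :=
    ((hccont.continuousOn).smul (hVc.mono hsub')).intervalIntegrable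
  have hintB : IntervalIntegrable (fun u => (Real.sin (c*u + θ)/c) • V' u) volume 0 t :=
    ((hscont.continuousOn).smul (hV'c.mono hsub')).intervalIntegrable
  have hGc : ContinuousOn G (Set.Icc 0 t) := (hscont.continuousOn).smul (hVc.mono hsub)
  have hFTC : ∫ u in (0:ℝ)..t,
      (Real.cos (c*u + θ) • V u + (Real.sin (c*u + θ)/c) • V' u) = G t - G 0 :=
    intervalIntegral.integral_eq_sub_of_hasDerivAt_of_le ht.1 hGc hGd (hintA.add hintB)
  have hsplit : ∫ u in (0:ℝ)..t, Real.cos (c*u + θ) • V u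
      = (G t - G 0) - ∫ u in (0:ℝ)..t, (Real.sin (c*u + θ)/c) • V' u := by
    rw [← hFTC, intervalIntegral.integral_add hintA hintB]; abel
  have hGbound : ∀ u ∈ Set.Icc (0:ℝ) 1, ‖G u‖ ≤ M/c := by
    intro u hu
    rw [hGdef, norm_smul]
    have h1 : ‖Real.sin (c*u+θ)/c‖ ≤ 1/c := by
      rw [Real.norm_eq_abs, abs_div, abs_of_pos hc0]
      gcongr
      exact Real.abs_sin_le_one _
    calc ‖Real.sin (c*u+θ)/c‖ * ‖V u‖ ≤ (1/c) * M :=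
          mul_le_mul h1 (hM u hu).1 (norm_nonneg _) (by positivity)
      _ = M/c := by ring
  have hIB : ‖∫ u in (0:ℝ)..t, (Real.sin (c*u + θ)/c) • V' u‖ ≤ M/c := by
    have h1 : ‖∫ u in (0:ℝ)..t, (Real.sin (c*u + θ)/c) • V' u‖ ≤ (M/c) * |t - 0| := by
      apply intervalIntegral.norm_integral_le_of_norm_le_const
      intro u hu
      have hu' : u ∈ Set.Icc (0:ℝ) 1 := hsub' (Set.uIoc_subset_uIcc hu)
      rw [norm_smul]
      calc ‖Real.sin (c*u+θ)/c‖ * ‖V' u‖ ≤ (1/c) * M := by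
            apply mul_le_mul _ (hM u hu').2 (norm_nonneg _) (by positivity)
            rw [Real.norm_eq_abs, abs_div, abs_of_pos hc0]
            gcongr
            exact Real.abs_sin_le_one _
        _ = M/c := by ring
    have h2 : |t - 0| ≤ 1 := by
      rw [sub_zero, abs_of_nonneg ht.1]; exact ht.2
    calc ‖∫ u in (0:ℝ)..t, (Real.sin (c*u + θ)/c) • V' u‖ ≤ (M/c) * |t - 0| := h1
      _ ≤ (M/c) * 1 := by gcongr
      _ = M/c := mul_one _
  rw [hsplit]
  have : ‖(G t - G 0) - ∫ u in (0:ℝ)..t, (Real.sin (c*u + θ)/c) • V' u‖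
      ≤ ‖G t‖ + ‖G 0‖ + ‖∫ u in (0:ℝ)..t, (Real.sin (c*u + θ)/c) • V' u‖ := by
    calc _ ≤ ‖G t - G 0‖ + ‖∫ u in (0:ℝ)..t, (Real.sin (c*u + θ)/c) • V' u‖ :=
          norm_sub_le _ _
      _ ≤ ‖G t‖ + ‖G 0‖ + _ := by gcongr; exact norm_sub_le _ _
  refine this.trans ?_
  have e1 := hGbound t ht
  have e2 := hGbound 0 (by norm_num)
  have : 3*M/(2*π*n) = M/c + M/c + M/c := by rw [hc]; ring
  rw [this]
  gcongr


/-- The deterministic Nash twist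
`f_n t = f0 0 + ∫_0^t (f0' u + r u • (cos (2πnu) • Y u + sin (2πnu) • Z u)) du`
satisfies `sup_{t ∈ [0,1]} ‖f_n t − f0 t‖ ≤ C/n` for a constant `C` independent of `n`. -/
theorem nash_twist_C0_close
    (g : ℝ → ℝ) (hg : ContDiffOn ℝ (⊤ : ℕ∞) g (Set.Icc 0 1))
    (hgpos : ∀ u ∈ Set.Icc (0:ℝ) 1, 0 < g u)
    (f0 f0' : ℝ → EuclideanSpace ℝ (Fin 3))
    (hf0 : ContDiffOn ℝ (⊤ : ℕ∞) f0 (Set.Icc 0 1))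
    (hf0' : ∀ u ∈ Set.Icc (0:ℝ) 1, HasDerivWithinAt f0 (f0' u) (Set.Icc 0 1) u)
    (hf0'cont : ContinuousOn f0' (Set.Icc 0 1))
    (hshort : ∀ u ∈ Set.Icc (0:ℝ) 1, 0 < ‖f0' u‖ ∧ ‖f0' u‖ < Real.sqrt (g u))
    (r : ℝ → ℝ) (hr : ∀ u, r u = Real.sqrt (g u - ‖f0' u‖ ^ 2))
    (Y Z : ℝ → EuclideanSpace ℝ (Fin 3))
    (hY : ContDiffOn ℝ (⊤ : ℕ∞) Y (Set.Icc 0 1)) (hZ : ContDiffOn ℝ (⊤ : ℕ∞) Z (Set.Icc 0 1))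
    (honb : ∀ u ∈ Set.Icc (0:ℝ) 1,
      ‖Y u‖ = 1 ∧ ‖Z u‖ = 1 ∧ inner ℝ (Y u) (Z u) = (0:ℝ) ∧
      inner ℝ (f0' u) (Y u) = (0:ℝ) ∧ inner ℝ (f0' u) (Z u) = (0:ℝ))
    (fn : ℕ → ℝ → EuclideanSpace ℝ (Fin 3))
    (hfn : ∀ (n : ℕ) (t : ℝ), fn n t = f0 0 + ∫ u in (0:ℝ)..t,
      (f0' u + r u • (Real.cos (2 * π * n * u) • Y u + Real.sin (2 * π * n * u) • Z u))) :
    ∃ C : ℝ, 0 ≤ C ∧ ∀ n : ℕ, 1 ≤ n → ∀ t ∈ Set.Icc (0:ℝ) 1,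
      ‖fn n t - f0 t‖ ≤ C / n := by
  have hπ := Real.pi_pos
  have hud : UniqueDiffOn ℝ (Set.Icc (0:ℝ) 1) := uniqueDiffOn_Icc zero_lt_one
  -- f0' is smooth on the interval
  have hf0'eq : ∀ u ∈ Set.Icc (0:ℝ) 1, f0' u = derivWithin f0 (Set.Icc 0 1) u :=
    fun u hu => ((hf0' u hu).derivWithin (hud u hu)).symm
  have hf0's : ContDiffOn ℝ 1 f0' (Set.Icc 0 1) :=
    (hf0.derivWithin hud (WithTop.coe_le_coe.mpr le_top)).congr hf0'eq
  -- r is C¹ on the interval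
  have hpos : ∀ u ∈ Set.Icc (0:ℝ) 1, 0 < g u - ‖f0' u‖^2 := by
    intro u hu
    have h1 := (hshort u hu).2
    have h2 := (hshort u hu).1
    nlinarith [Real.sq_sqrt (hgpos u hu).le]
  have hrs : ContDiffOn ℝ 1 r (Set.Icc 0 1) := by
    have h1 : ContDiffOn ℝ 1 (fun u => g u - ‖f0' u‖^2) (Set.Icc 0 1) :=
      (hg.of_le (by simp)).sub (hf0's.norm_sq ℝ)
    exact (h1.sqrt (fun u hu => (hpos u hu).ne')).congr (fun u _ => hr u)
  -- the two C¹ vector fields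
  set V : ℝ → EuclideanSpace ℝ (Fin 3) := fun u => r u • Y u with hVdef
  set W : ℝ → EuclideanSpace ℝ (Fin 3) := fun u => r u • Z u with hWdef
  have hVs : ContDiffOn ℝ 1 V (Set.Icc 0 1) := hrs.smul (hY.of_le (by simp))
  have hWs : ContDiffOn ℝ 1 W (Set.Icc 0 1) := hrs.smul (hZ.of_le (by simp))
  set V' : ℝ → EuclideanSpace ℝ (Fin 3) := derivWithin V (Set.Icc 0 1) with hV'def
  set W' : ℝ → EuclideanSpace ℝ (Fin 3) := derivWithin W (Set.Icc 0 1) with hW'def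
  have hV'c : ContinuousOn V' (Set.Icc 0 1) := hVs.continuousOn_derivWithin hud le_rfl
  have hW'c : ContinuousOn W' (Set.Icc 0 1) := hWs.continuousOn_derivWithin hud le_rfl
  have hVd : ∀ u ∈ Set.Ioo (0:ℝ) 1, HasDerivAt V (V' u) u := by
    intro u hu
    exact ((hVs.differentiableOn one_ne_zero u (Set.Ioo_subset_Icc_self hu)).hasDerivWithinAt).hasDerivAt
      (Icc_mem_nhds hu.1 hu.2)
  have hWd : ∀ u ∈ Set.Ioo (0:ℝ) 1, HasDerivAt W (W' u) u := by
    intro u hu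
    exact ((hWs.differentiableOn one_ne_zero u (Set.Ioo_subset_Icc_self hu)).hasDerivWithinAt).hasDerivAt
      (Icc_mem_nhds hu.1 hu.2)
  -- bounds
  obtain ⟨M1, hM1⟩ := isCompact_Icc.exists_bound_of_continuousOn hVs.continuousOn
  obtain ⟨M2, hM2⟩ := isCompact_Icc.exists_bound_of_continuousOn hV'c
  obtain ⟨M3, hM3⟩ := isCompact_Icc.exists_bound_of_continuousOn hWs.continuousOn
  obtain ⟨M4, hM4⟩ := isCompact_Icc.exists_bound_of_continuousOn hW'c
  set MV : ℝ := max M1 M2 with hMVdef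
  set MW : ℝ := max M3 M4 with hMWdef
  have hMV : ∀ u ∈ Set.Icc (0:ℝ) 1, ‖V u‖ ≤ MV ∧ ‖V' u‖ ≤ MV :=
    fun u hu => ⟨(hM1 u hu).trans (le_max_left _ _), (hM2 u hu).trans (le_max_right _ _)⟩
  have hMW : ∀ u ∈ Set.Icc (0:ℝ) 1, ‖W u‖ ≤ MW ∧ ‖W' u‖ ≤ MW :=
    fun u hu => ⟨(hM3 u hu).trans (le_max_left _ _), (hM4 u hu).trans (le_max_right _ _)⟩
  have hMV0 : 0 ≤ MV := le_trans (norm_nonneg _) (hMV 0 (by norm_num)).1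
  have hMW0 : 0 ≤ MW := le_trans (norm_nonneg _) (hMW 0 (by norm_num)).1
  refine ⟨(3*MV + 3*MW)/(2*π), by positivity, ?_⟩
  intro n hn t ht
  have hn0 : (0:ℝ) < n := by exact_mod_cast hn
  have hsub : Set.Icc (0:ℝ) t ⊆ Set.Icc 0 1 := Set.Icc_subset_Icc le_rfl ht.2
  have hsub' : Set.uIcc (0:ℝ) t ⊆ Set.Icc 0 1 := by
    rw [Set.uIcc_of_le ht.1]; exact hsub
  have hlinc : Continuous fun u : ℝ => 2*π*(n:ℝ)*u := continuous_const.mul continuous_id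
  have hccont : Continuous fun u : ℝ => Real.cos (2*π*n*u) := Real.continuous_cos.comp hlinc
  have hscont : Continuous fun u : ℝ => Real.sin (2*π*n*u) := Real.continuous_sin.comp hlinc
  -- FTC for f0
  have hf0FTC : ∫ u in (0:ℝ)..t, f0' u = f0 t - f0 0 := by
    apply intervalIntegral.integral_eq_sub_of_hasDerivAt_of_le ht.1
      (hf0.continuousOn.mono hsub)
    · intro u hu
      have hu1 : u ∈ Set.Ioo (0:ℝ) 1 := ⟨hu.1, lt_of_lt_of_le hu.2 ht.2⟩
      exact (hf0' u (Set.Ioo_subset_Icc_self hu1)).hasDerivAt (Icc_mem_nhds hu1.1 hu1.2)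
    · exact ((hf0'cont.mono hsub')).intervalIntegrable
  -- integrability of pieces
  have hintV : IntervalIntegrable (fun u => Real.cos (2*π*n*u) • V u) volume 0 t :=
    (hccont.continuousOn.smul (hVs.continuousOn.mono hsub')).intervalIntegrable
  have hintW : IntervalIntegrable (fun u => Real.sin (2*π*n*u) • W u) volume 0 t :=
    (hscont.continuousOn.smul (hWs.continuousOn.mono hsub')).intervalIntegrable
  have hintf0' : IntervalIntegrable f0' volume 0 t := (hf0'cont.mono hsub').intervalIntegrable
  -- the difference
  have hkey : fn n t - f0 t = (∫ u in (0:ℝ)..t, Real.cos (2*π*n*u) • V u)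
      + ∫ u in (0:ℝ)..t, Real.sin (2*π*n*u) • W u := by
    rw [hfn n t]
    have heq : (fun u => f0' u + r u • (Real.cos (2 * π * n * u) • Y u
        + Real.sin (2 * π * n * u) • Z u))
        = fun u => f0' u + (Real.cos (2*π*n*u) • V u + Real.sin (2*π*n*u) • W u) := by
      funext u
      rw [hVdef, hWdef]
      simp only [smul_add]
      rw [smul_comm (r u) (Real.cos (2*π*n*u)), smul_comm (r u) (Real.sin (2*π*n*u))]
    rw [heq, intervalIntegral.integral_add hintf0' (hintV.add hintW),
      intervalIntegral.integral_add hintV hintW, hf0FTC]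
    abel
  rw [hkey]
  have hb1 : ‖∫ u in (0:ℝ)..t, Real.cos (2*π*n*u) • V u‖ ≤ 3*MV/(2*π*n) := by
    have := osc_bound V V' hVd hVs.continuousOn hV'c MV hMV n hn 0 t ht
    simpa using this
  have hb2 : ‖∫ u in (0:ℝ)..t, Real.sin (2*π*n*u) • W u‖ ≤ 3*MW/(2*π*n) := by
    have := osc_bound W W' hWd hWs.continuousOn hW'c MW hMW n hn (-(π/2)) t ht
    have heq : (fun u => Real.cos (2*π*(n:ℝ)*u + -(π/2)) • W u)
        = fun u => Real.sin (2*π*(n:ℝ)*u) • W u := by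
      funext u
      rw [← sub_eq_add_neg, Real.cos_sub_pi_div_two]
    rwa [heq] at this
  calc ‖(∫ u in (0:ℝ)..t, Real.cos (2*π*n*u) • V u)
      + ∫ u in (0:ℝ)..t, Real.sin (2*π*n*u) • W u‖
      ≤ ‖∫ u in (0:ℝ)..t, Real.cos (2*π*n*u) • V u‖
        + ‖∫ u in (0:ℝ)..t, Real.sin (2*π*n*u) • W u‖ := norm_add_le _ _
    _ ≤ 3*MV/(2*π*n) + 3*MW/(2*π*n) := add_le_add hb1 hb2
    _ = (3*MV + 3*MW)/(2*π) / n := by field_simp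
end

section
/- For every ω ∈ Ω, every positive integer n and every s ∈ [0,1], the modulus of ∫_0^s e^{2πi H_n(ω,u)} du is at most √5/(2πn); in particular sup_{s∈[0,1]} |∫_0^s e^{2πi H_n(ω,u)} du| ≤ 1/n, uniformly in ω. -/
/-!
On the `k`-th piece `[k/n, (k+1)/n]` the phase `H_n(ω, ·)` is affine with slope `n X_{k+1} = ±n`,
so it increases by `±1` over the piece and `e^{2πiH}` winds exactly once around the circle:
every complete piece contributes `0`. The integral over `[0, s]` therefore reduces to the
integral over the incomplete piece containing `s`, which equals
`(e^{2πiH(s)} - e^{2πiH(k/n)}) / (±2πin)` and has modulus at most `2 / (2πn) ≤ √5 / (2πn)`.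
-/

open MeasureTheory Real

open Set

theorem integral_exp_two_pi_I_affine {b : ℝ} (hb : b ≠ 0) (a α t : ℝ) :
    ∫ u in α..t, Complex.exp (2 * π * Complex.I * ((a + b * (u - α) : ℝ) : ℂ)) =
      (Complex.exp (2 * π * Complex.I * ((a + b * (t - α) : ℝ) : ℂ)) -
        Complex.exp (2 * π * Complex.I * a)) / (2 * π * Complex.I * b) := by
  have hc : (2 * π * Complex.I * b) ≠ 0 := by simp [hb, pi_ne_zero]
  have hderiv : ∀ u : ℝ, HasDerivAt
      (fun u : ℝ =>
        Complex.exp (2 * π * Complex.I * ((a + b * (u - α) : ℝ) : ℂ)) / (2 * π * Complex.I * b))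
      (Complex.exp (2 * π * Complex.I * ((a + b * (u - α) : ℝ) : ℂ))) u := by
    intro u
    have h := ((((hasDerivAt_id' u).sub_const α).const_mul b).const_add a).ofReal_comp
      |>.const_mul (2 * π * Complex.I) |>.cexp |>.div_const (2 * π * Complex.I * b)
    rwa [mul_one, mul_div_assoc, div_self hc, mul_one] at h
  rw [intervalIntegral.integral_eq_sub_of_hasDerivAt (fun u _ => hderiv u), sub_div, sub_self,
    mul_zero, add_zero]
  exact (by fun_prop : Continuous fun u : ℝ =>
    Complex.exp (2 * π * Complex.I * ((a + b * (u - α) : ℝ) : ℂ))).intervalIntegrable _ _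

section AffinePhase

variable {φ : ℝ → ℝ} {α β b : ℝ}

theorem intervalIntegrable_exp_two_pi_I_of_eqOn_affine (hαβ : α ≤ β)
    (hφ : ∀ u ∈ Icc α β, φ u = φ α + b * (u - α)) :
    IntervalIntegrable (fun u => Complex.exp (2 * π * Complex.I * φ u)) volume α β := by
  refine ContinuousOn.intervalIntegrable ?_
  rw [uIcc_of_le hαβ]
  have : ContinuousOn φ (Icc α β) :=
    (by fun_prop : Continuous fun u => φ α + b * (u - α)).continuousOn.congr hφ
  fun_prop

theorem integral_exp_two_pi_I_of_eqOn_affine (hb : b ≠ 0) (hαβ : α ≤ β)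
    (hφ : ∀ u ∈ Icc α β, φ u = φ α + b * (u - α)) :
    ∫ u in α..β, Complex.exp (2 * π * Complex.I * φ u) =
      (Complex.exp (2 * π * Complex.I * φ β) - Complex.exp (2 * π * Complex.I * φ α)) /
        (2 * π * Complex.I * b) := by
  have hcongr : EqOn (fun u => Complex.exp (2 * π * Complex.I * φ u))
      (fun u => Complex.exp (2 * π * Complex.I * ((φ α + b * (u - α) : ℝ) : ℂ))) (uIcc α β) := by
    intro u hu
    rw [uIcc_of_le hαβ] at hu
    simp only [hφ u hu]
  rw [intervalIntegral.integral_congr hcongr, integral_exp_two_pi_I_affine hb,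
    ← hφ β (right_mem_Icc.2 hαβ)]

theorem integral_exp_two_pi_I_eq_zero_of_eqOn_affine (hb : b ≠ 0) (hαβ : α ≤ β)
    (hφ : ∀ u ∈ Icc α β, φ u = φ α + b * (u - α)) {m : ℤ} (hm : φ β = φ α + m) :
    ∫ u in α..β, Complex.exp (2 * π * Complex.I * φ u) = 0 := by
  rw [integral_exp_two_pi_I_of_eqOn_affine hb hαβ hφ, hm]
  push_cast
  rw [mul_add, Complex.exp_add, mul_comm _ (m : ℂ), Complex.exp_int_mul_two_pi_mul_I, mul_one,
    sub_self, zero_div]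

theorem norm_integral_exp_two_pi_I_le_of_eqOn_affine (hb : b ≠ 0) (hαβ : α ≤ β)
    (hφ : ∀ u ∈ Icc α β, φ u = φ α + b * (u - α)) :
    ‖∫ u in α..β, Complex.exp (2 * π * Complex.I * φ u)‖ ≤ 1 / (π * |b|) := by
  have hunit : ∀ x : ℝ, ‖Complex.exp (2 * π * Complex.I * x)‖ = 1 := fun x => by
    rw [show 2 * π * Complex.I * x = ((2 * π * x : ℝ) : ℂ) * Complex.I by push_cast; ring,
      Complex.norm_exp_ofReal_mul_I]
  rw [integral_exp_two_pi_I_of_eqOn_affine hb hαβ hφ, norm_div]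
  calc _ ≤ (1 + 1) / ‖2 * π * Complex.I * b‖ := by
        gcongr
        exact (norm_sub_le _ _).trans (by rw [hunit, hunit])
    _ = 1 / (π * |b|) := by
        simp only [norm_mul, Complex.norm_ofNat, Complex.norm_real, Complex.norm_I, norm_eq_abs,
          abs_of_pos pi_pos]
        field_simp
        ring

end AffinePhase

theorem exists_lt_mem_Icc_div_succ_div {n : ℕ} (hn : 0 < n) {s : ℝ} (hs : s ∈ Icc (0 : ℝ) 1) :
    ∃ k < n, s ∈ Icc ((k : ℝ) / n) (((k : ℝ) + 1) / n) := by
  have hn0 : (0 : ℝ) < n := by exact_mod_cast hn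
  have hns : 0 ≤ (n : ℝ) * s := mul_nonneg hn0.le hs.1
  rcases hs.2.lt_or_eq with hs1 | rfl
  · refine ⟨⌊(n : ℝ) * s⌋₊, (Nat.floor_lt hns).2 (by nlinarith), ?_, ?_⟩
    · rw [div_le_iff₀ hn0, mul_comm s]
      exact Nat.floor_le hns
    · rw [le_div_iff₀ hn0, mul_comm s]
      exact (Nat.lt_floor_add_one _).le
  · refine ⟨n - 1, by omega, ?_, ?_⟩ <;> rw [Nat.cast_pred hn]
    · rw [div_le_one hn0]; linarith
    · rw [sub_add_cancel, div_self hn0.ne']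

section PiecewiseAffinePhase

variable {n : ℕ} {φ : ℝ → ℝ} {ε : ℕ → ℝ}

theorem intervalIntegrable_exp_two_pi_I_of_piecewise_affine
    (hφ : ∀ k < n, ∀ u ∈ Icc ((k : ℝ) / n) (((k : ℝ) + 1) / n),
      φ u = φ (k / n) + n * ε k * (u - k / n))
    {k : ℕ} (hk : k ≤ n) :
    IntervalIntegrable (fun u => Complex.exp (2 * π * Complex.I * φ u)) volume 0 (k / n) := by
  simpa using IntervalIntegrable.trans_iterate (a := fun j : ℕ => (j : ℝ) / n) fun j hj => by
    rw [Nat.cast_succ]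
    exact intervalIntegrable_exp_two_pi_I_of_eqOn_affine (by gcongr; linarith) (hφ j (by omega))

theorem integral_exp_two_pi_I_of_piecewise_affine_eq_zero (hn : 0 < n)
    (hε : ∀ k, ε k = 1 ∨ ε k = -1)
    (hφ : ∀ k < n, ∀ u ∈ Icc ((k : ℝ) / n) (((k : ℝ) + 1) / n),
      φ u = φ (k / n) + n * ε k * (u - k / n))
    {k : ℕ} (hk : k ≤ n) :
    ∫ u in (0 : ℝ)..(k / n), Complex.exp (2 * π * Complex.I * φ u) = 0 := by
  induction k with
  | zero => simp
  | succ k ih =>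
    have hk : k < n := hk
    have hle : (k : ℝ) / n ≤ ((k : ℝ) + 1) / n := by gcongr; linarith
    have hslope : (n : ℝ) * ε k ≠ 0 := by
      rcases hε k with h | h <;> simp [h, hn.ne']
    have hstep : φ (((k : ℝ) + 1) / n) = φ (k / n) + ε k := by
      rw [hφ k hk _ (right_mem_Icc.2 hle)]
      field_simp
      ring
    have hpiece : ∫ u in ((k : ℝ) / n)..(((k : ℝ) + 1) / n),
        Complex.exp (2 * π * Complex.I * φ u) = 0 := by
      rcases hε k with h | h
      · exact integral_exp_two_pi_I_eq_zero_of_eqOn_affine hslope hle (hφ k hk) (m := 1)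
          (by rw [hstep, h]; simp)
      · exact integral_exp_two_pi_I_eq_zero_of_eqOn_affine hslope hle (hφ k hk) (m := -1)
          (by rw [hstep, h]; simp)
    rw [Nat.cast_succ, ← intervalIntegral.integral_add_adjacent_intervals
      (intervalIntegrable_exp_two_pi_I_of_piecewise_affine hφ hk.le)
      (intervalIntegrable_exp_two_pi_I_of_eqOn_affine hle (hφ k hk)), ih hk.le, hpiece, add_zero]

theorem norm_integral_exp_two_pi_I_le_of_piecewise_affine (hn : 0 < n)
    (hε : ∀ k, ε k = 1 ∨ ε k = -1)
    (hφ : ∀ k < n, ∀ u ∈ Icc ((k : ℝ) / n) (((k : ℝ) + 1) / n),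
      φ u = φ (k / n) + n * ε k * (u - k / n))
    {s : ℝ} (hs : s ∈ Icc (0 : ℝ) 1) :
    ‖∫ u in (0 : ℝ)..s, Complex.exp (2 * π * Complex.I * φ u)‖ ≤ 1 / (π * n) := by
  obtain ⟨k, hk, hks⟩ := exists_lt_mem_Icc_div_succ_div hn hs
  have hφs : ∀ u ∈ Icc ((k : ℝ) / n) s, φ u = φ (k / n) + n * ε k * (u - k / n) :=
    fun u hu => hφ k hk u ⟨hu.1, hu.2.trans hks.2⟩
  have hslope : (n : ℝ) * ε k ≠ 0 := by
    rcases hε k with h | h <;> simp [h, hn.ne']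
  rw [← intervalIntegral.integral_add_adjacent_intervals
    (intervalIntegrable_exp_two_pi_I_of_piecewise_affine hφ hk.le)
    (intervalIntegrable_exp_two_pi_I_of_eqOn_affine hks.1 hφs),
    integral_exp_two_pi_I_of_piecewise_affine_eq_zero hn hε hφ hk.le, zero_add]
  calc _ ≤ 1 / (π * |n * ε k|) := norm_integral_exp_two_pi_I_le_of_eqOn_affine hslope hks.1 hφs
    _ = 1 / (π * n) := by rcases hε k with h | h <;> simp [h]

end PiecewiseAffinePhase

theorem random_phase_exp_integral_bound_general
    {Ω : Type*}
    (X : ℕ → Ω → ℝ)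
    (hpm : ∀ k ω, X k ω = 1 ∨ X k ω = -1)
    (H : ℕ → Ω → ℝ → ℝ)
    (hH : ∀ n : ℕ, 1 ≤ n → ∀ (ω : Ω) (k : ℕ), k ≤ n - 1 → ∀ u : ℝ,
      (k : ℝ) / n ≤ u → u ≤ ((k : ℝ) + 1) / n →
      H n ω u = (∑ i ∈ Finset.range k, X (i + 1) ω) + n * X (k + 1) ω * (u - (k : ℝ) / n))
    :
    ∀ (ω : Ω) (n : ℕ), 1 ≤ n → ∀ s ∈ Set.Icc (0:ℝ) 1,
      ‖∫ u in (0:ℝ)..s, Complex.exp (2 * π * Complex.I * H n ω u)‖ ≤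
        Real.sqrt 5 / (2 * π * n) ∧
      ‖∫ u in (0:ℝ)..s, Complex.exp (2 * π * Complex.I * H n ω u)‖ ≤
        1 / n := by
  intro ω n hn s hs
  have hpiece : ∀ k < n, ∀ u ∈ Icc ((k : ℝ) / n) (((k : ℝ) + 1) / n),
      H n ω u = H n ω (k / n) + n * X (k + 1) ω * (u - k / n) := fun k hk u hu => by
    rw [hH n hn ω k (by omega) u hu.1 hu.2, hH n hn ω k (by omega) _ le_rfl (hu.1.trans hu.2)]
    ring
  have hbound : ‖∫ u in (0 : ℝ)..s, Complex.exp (2 * π * Complex.I * H n ω u)‖ ≤ 1 / (π * n) :=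
    norm_integral_exp_two_pi_I_le_of_piecewise_affine hn (fun k => hpm (k + 1) ω) hpiece hs
  have hn0 : (0 : ℝ) < n := by exact_mod_cast hn
  have hsqrt5 : 1 / (π * n) ≤ √5 / (2 * π * n) := calc
    1 / (π * n) = 2 / (2 * π * n) := by field_simp
    _ ≤ √5 / (2 * π * n) := by gcongr; exact Real.le_sqrt_of_sq_le (by norm_num)
  have hsqrt5_le : √5 / (2 * π * n) ≤ 1 / n := calc
    √5 / (2 * π * n) ≤ 2 * π / (2 * π * n) := by
      have h5 : √5 < 3 := (Real.sqrt_lt' (by norm_num)).2 (by norm_num)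
      gcongr
      linarith [pi_gt_three]
    _ = 1 / n := by field_simp
  exact ⟨hbound.trans hsqrt5, hbound.trans (hsqrt5.trans hsqrt5_le)⟩

/-- For every `ω`, every `n ≥ 1` and every `s ∈ [0,1]`,
`|∫_0^s e^{2πiH_n(ω,u)} du| ≤ √5/(2πn) ≤ 1/n`, uniformly in `ω`. -/
theorem random_phase_exp_integral_bound
    {Ω : Type*} [MeasurableSpace Ω] (P : MeasureTheory.Measure Ω)
    [MeasureTheory.IsProbabilityMeasure P]
    (X : ℕ → Ω → ℝ) (hXmeas : ∀ k, Measurable (X k))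
    (hiid : ProbabilityTheory.iIndepFun X P)
    (hdist : ∀ k, P {ω | X k ω = 1} = 1/2 ∧ P {ω | X k ω = -1} = 1/2)
    (hpm : ∀ k ω, X k ω = 1 ∨ X k ω = -1)
    (H : ℕ → Ω → ℝ → ℝ)
    (hH : ∀ n : ℕ, 1 ≤ n → ∀ (ω : Ω) (k : ℕ), k ≤ n - 1 → ∀ u : ℝ,
      (k : ℝ) / n ≤ u → u ≤ ((k : ℝ) + 1) / n →
      H n ω u = (∑ i ∈ Finset.range k, X (i + 1) ω) + n * X (k + 1) ω * (u - (k : ℝ) / n))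
    :
    ∀ (ω : Ω) (n : ℕ), 1 ≤ n → ∀ s ∈ Set.Icc (0:ℝ) 1,
      ‖∫ u in (0:ℝ)..s, Complex.exp (2 * π * Complex.I * H n ω u)‖ ≤
        Real.sqrt 5 / (2 * π * n) ∧
      ‖∫ u in (0:ℝ)..s, Complex.exp (2 * π * Complex.I * H n ω u)‖ ≤
        1 / n :=
  random_phase_exp_integral_bound_general X hpm H hH
end

section
/- There is a constant C > 0 such that for every positive integer n, every ω ∈ Ω, every 0 ≤ k ≤ n−1 and every t ∈ [k/n, (k+1)/n), one has | ∫_0^t ( ∫_0^s e^{2πi H_n(ω,u)} du ) ds − (i/(2πn²)) S_k(ω) | ≤ C/n². That is, the iterated integral ∫_0^t ∫_0^s e^{2πi H_n(ω,u)} du ds equals (i/(2πn²)) S_{⌊nt⌋}(ω) up to an error of order 1/n² uniformly in t and ω. -/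
/-!
On the `j`-th cell `[j/n, (j+1)/n]` the path `H_n` is linear with slope `± n` and starts at the
integer `S_j`, so `e^{2πiH_n(u)} = e^{c_j (u - j/n)}` with `c_j = ± 2πin`, and this exponential
runs through one full period on each cell. Hence the inner integral vanishes at every grid point,
on the `j`-th cell it equals `(e^{c_j (s - j/n)} - 1)/c_j`, its integral over that cell is
`-1/(n c_j) = i X_{j+1} / (2πn²)`, and on the last, incomplete cell it is bounded by
`2/|c_k| = 1/(πn)`.
-/

open MeasureTheory Real

section

open Set Complex

theorem integral_cexp_mul_sub {c : ℂ} (hc : c ≠ 0) (a b : ℝ) :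
    ∫ u in a..b, cexp (c * ↑(u - a)) = (cexp (c * ↑(b - a)) - 1) / c := by
  rw [intervalIntegral.integral_comp_sub_right (fun x : ℝ => cexp (c * x)),
    integral_exp_mul_complex hc]
  simp

theorem integral_cexp_mul_sub_sub_one_div {c : ℂ} (hc : c ≠ 0) (a b : ℝ) :
    ∫ s in a..b, (cexp (c * ↑(s - a)) - 1) / c =
      ((cexp (c * ↑(b - a)) - 1) / c - ↑(b - a)) / c := by
  have hcont : Continuous fun s : ℝ => cexp (c * ↑(s - a)) := by fun_prop
  rw [intervalIntegral.integral_div,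
    intervalIntegral.integral_sub (hcont.intervalIntegrable a b) intervalIntegrable_const,
    integral_cexp_mul_sub hc, intervalIntegral.integral_const, real_smul, mul_one]

theorem re_eq_zero_of_cexp_mul_ofReal_eq_one {c : ℂ} {h : ℝ} (hh : h ≠ 0)
    (hc : cexp (c * h) = 1) : c.re = 0 := by
  have := congrArg norm hc
  rw [norm_exp, norm_one, Real.exp_eq_one_iff, re_mul_ofReal] at this
  exact (mul_eq_zero.mp this).resolve_right hh

theorem norm_cexp_mul_ofReal_sub_one_div_le {c : ℂ} (hc : c.re = 0) (x : ℝ) :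
    ‖(cexp (c * x) - 1) / c‖ ≤ 2 / ‖c‖ := by
  rw [norm_div]
  gcongr
  calc ‖cexp (c * x) - 1‖ ≤ ‖cexp (c * x)‖ + ‖(1 : ℂ)‖ := norm_sub_le _ _
    _ = 2 := by rw [norm_exp, re_mul_ofReal, hc, zero_mul, Real.exp_zero, norm_one]; norm_num

section Grid

variable {E : Type*} [NormedAddCommGroup E] {g : ℝ → E} {h : ℝ} {k : ℕ}

theorem intervalIntegrable_zero_mul_of_continuousOn_Icc (hh : 0 ≤ h)
    (hg : ∀ j < k, ContinuousOn g (Icc (j * h) ((j + 1) * h))) :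
    IntervalIntegrable g volume 0 (k * h) := by
  simpa using IntervalIntegrable.trans_iterate (a := fun j : ℕ => (j : ℝ) * h) fun j hj => by
    simpa using (hg j hj).intervalIntegrable_of_Icc (by nlinarith)

theorem integral_zero_mul_eq_sum_of_continuousOn_Icc [NormedSpace ℝ E] (hh : 0 ≤ h)
    (hg : ∀ j < k, ContinuousOn g (Icc (j * h) ((j + 1) * h))) :
    ∫ u in 0..k * h, g u = ∑ j ∈ Finset.range k, ∫ u in j * h..(j + 1) * h, g u := by
  simpa using (intervalIntegral.sum_integral_adjacent_intervals
    (a := fun j : ℕ => (j : ℝ) * h) (μ := volume) fun j hj => by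
      simpa using (hg j hj).intervalIntegrable_of_Icc (by nlinarith)).symm

end Grid

structure IsPiecewiseCexp (f : ℝ → ℂ) (c : ℕ → ℂ) (h : ℝ) (N : ℕ) : Prop where
  pos : 0 < h
  ne_zero : ∀ j, c j ≠ 0
  cexp_mul_eq_one : ∀ j, cexp (c j * h) = 1
  eqOn : ∀ j < N, EqOn f (fun u => cexp (c j * ↑(u - j * h))) (Icc (j * h) ((j + 1) * h))

namespace IsPiecewiseCexp

variable {f : ℝ → ℂ} {c : ℕ → ℂ} {h : ℝ} {N j k : ℕ}

theorem cell_le (hf : IsPiecewiseCexp f c h N) (j : ℕ) : (j : ℝ) * h ≤ (j + 1) * h := by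
  nlinarith [hf.pos]

theorem continuousOn_cell (hf : IsPiecewiseCexp f c h N) (hj : j < N) :
    ContinuousOn f (Icc (j * h) ((j + 1) * h)) :=
  (by fun_prop : Continuous fun u : ℝ => cexp (c j * ↑(u - j * h))).continuousOn.congr
    (hf.eqOn j hj)

theorem integral_cell_eq_zero (hf : IsPiecewiseCexp f c h N) (hj : j < N) :
    ∫ u in j * h..(j + 1) * h, f u = 0 := by
  rw [intervalIntegral.integral_congr (uIcc_of_le (hf.cell_le j) ▸ hf.eqOn j hj),
    integral_cexp_mul_sub (hf.ne_zero j),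
    show (j + 1) * h - j * h = h by ring, hf.cexp_mul_eq_one, sub_self, zero_div]

theorem integral_zero_grid_eq_zero (hf : IsPiecewiseCexp f c h N) (hk : k ≤ N) :
    ∫ u in 0..k * h, f u = 0 := by
  rw [integral_zero_mul_eq_sum_of_continuousOn_Icc hf.pos.le
    fun j hj => hf.continuousOn_cell (hj.trans_le hk)]
  exact Finset.sum_eq_zero fun j hj =>
    hf.integral_cell_eq_zero ((Finset.mem_range.mp hj).trans_le hk)

theorem integral_zero_eq_of_mem_Icc (hf : IsPiecewiseCexp f c h N) (hj : j < N) {s : ℝ}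
    (hs : s ∈ Icc (j * h) ((j + 1) * h)) :
    ∫ u in 0..s, f u = (cexp (c j * ↑(s - j * h)) - 1) / c j := by
  have hcell : EqOn f (fun u => cexp (c j * ↑(u - j * h))) (Icc (j * h) s) :=
    (hf.eqOn j hj).mono (Icc_subset_Icc_right hs.2)
  rw [← intervalIntegral.integral_add_adjacent_intervals
      (intervalIntegrable_zero_mul_of_continuousOn_Icc hf.pos.le
        fun i hi => hf.continuousOn_cell (hi.trans hj))
      (((hf.continuousOn_cell hj).mono (Icc_subset_Icc_right hs.2)).intervalIntegrable_of_Icc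
        hs.1),
    hf.integral_zero_grid_eq_zero hj.le, zero_add,
    intervalIntegral.integral_congr (uIcc_of_le hs.1 ▸ hcell), integral_cexp_mul_sub (hf.ne_zero j)]

theorem continuousOn_primitive_cell (hf : IsPiecewiseCexp f c h N) (hj : j < N) :
    ContinuousOn (fun s => ∫ u in 0..s, f u) (Icc (j * h) ((j + 1) * h)) :=
  (by fun_prop : Continuous fun s : ℝ => (cexp (c j * ↑(s - j * h)) - 1) / c j).continuousOn.congr
    fun _ hs => hf.integral_zero_eq_of_mem_Icc hj hs

theorem integral_primitive_cell (hf : IsPiecewiseCexp f c h N) (hj : j < N) :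
    ∫ s in j * h..(j + 1) * h, (∫ u in 0..s, f u) = -h / c j := by
  rw [intervalIntegral.integral_congr (uIcc_of_le (hf.cell_le j) ▸
      fun _ hs => hf.integral_zero_eq_of_mem_Icc hj hs),
    integral_cexp_mul_sub_sub_one_div (hf.ne_zero j), show (j + 1) * h - j * h = h by ring,
    hf.cexp_mul_eq_one, sub_self, zero_div, zero_sub, neg_div]

theorem integral_primitive_grid (hf : IsPiecewiseCexp f c h N) (hk : k ≤ N) :
    ∫ s in 0..k * h, (∫ u in 0..s, f u) = ∑ j ∈ Finset.range k, -h / c j := by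
  rw [integral_zero_mul_eq_sum_of_continuousOn_Icc hf.pos.le
    fun j hj => hf.continuousOn_primitive_cell (hj.trans_le hk)]
  exact Finset.sum_congr rfl fun j hj =>
    hf.integral_primitive_cell ((Finset.mem_range.mp hj).trans_le hk)

theorem norm_primitive_le (hf : IsPiecewiseCexp f c h N) (hj : j < N) {s : ℝ}
    (hs : s ∈ Icc (j * h) ((j + 1) * h)) : ‖∫ u in 0..s, f u‖ ≤ 2 / ‖c j‖ := by
  rw [hf.integral_zero_eq_of_mem_Icc hj hs]
  exact norm_cexp_mul_ofReal_sub_one_div_le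
    (re_eq_zero_of_cexp_mul_ofReal_eq_one hf.pos.ne' (hf.cexp_mul_eq_one j)) _

theorem norm_integral_primitive_sub_sum_le (hf : IsPiecewiseCexp f c h N) (hk : k < N) {t : ℝ}
    (ht : t ∈ Icc (k * h) ((k + 1) * h)) :
    ‖(∫ s in 0..t, ∫ u in 0..s, f u) - ∑ j ∈ Finset.range k, -h / c j‖ ≤ 2 / ‖c k‖ * h := by
  have hgrid := intervalIntegrable_zero_mul_of_continuousOn_Icc hf.pos.le
    fun j hj => hf.continuousOn_primitive_cell (hj.trans hk)
  have hcell : IntervalIntegrable (fun s => ∫ u in 0..s, f u) volume (k * h) t :=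
    ((hf.continuousOn_primitive_cell hk).mono (Icc_subset_Icc_right ht.2)).intervalIntegrable_of_Icc
      ht.1
  rw [← hf.integral_primitive_grid hk.le,
    intervalIntegral.integral_interval_sub_left (hgrid.trans hcell) hgrid]
  refine (intervalIntegral.norm_integral_le_of_norm_le_const (C := 2 / ‖c k‖)
    fun s hs => ?_).trans ?_
  · rw [uIoc_of_le ht.1] at hs
    exact hf.norm_primitive_le hk ⟨hs.1.le, hs.2.trans ht.2⟩
  · rw [abs_of_nonneg (sub_nonneg.mpr ht.1)]
    gcongr
    linarith [ht.2]

end IsPiecewiseCexp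

section LinearInterpolation

variable {n : ℕ} {ε : ℕ → ℝ} {H : ℝ → ℝ}

theorem exists_int_sum_eq_of_eq_one_or_neg_one (hε : ∀ j, ε j = 1 ∨ ε j = -1) (k : ℕ) :
    ∃ m : ℤ, (m : ℝ) = ∑ i ∈ Finset.range k, ε i :=
  RingHom.mem_range.mp <| Subring.sum_mem (Int.castRingHom ℝ).range fun i _ =>
    (hε i).elim (fun h => ⟨1, by simp [h]⟩) (fun h => ⟨-1, by simp [h]⟩)

theorem isPiecewiseCexp_of_interpolation (hn : 0 < n) (hε : ∀ j, ε j = 1 ∨ ε j = -1)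
    (hH : ∀ k < n, ∀ u : ℝ, (k : ℝ) / n ≤ u → u ≤ ((k : ℝ) + 1) / n →
      H u = ∑ i ∈ Finset.range k, ε i + n * ε k * (u - k / n)) :
    IsPiecewiseCexp (fun u => cexp (2 * π * I * H u)) (fun j => 2 * π * I * n * ε j)
      (n : ℝ)⁻¹ n where
  pos := by positivity
  ne_zero j := by rcases hε j with h | h <;> simp [h, pi_ne_zero, hn.ne']
  cexp_mul_eq_one j := by
    have hn' : (n : ℂ) ≠ 0 := by exact_mod_cast hn.ne'
    rcases hε j with h | h
    · simpa [h, mul_assoc, hn'] using exp_int_mul_two_pi_mul_I 1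
    · simpa [h, mul_assoc, hn'] using exp_int_mul_two_pi_mul_I (-1)
  eqOn j hj u hu := by
    obtain ⟨m, hm⟩ := exists_int_sum_eq_of_eq_one_or_neg_one hε j
    simp only [div_eq_mul_inv] at hH
    dsimp only
    rw [hH j hj u hu.1 hu.2, ← hm]
    push_cast
    rw [mul_add, Complex.exp_add, show 2 * π * I * m = m * (2 * π * I) by ring,
      exp_int_mul_two_pi_mul_I, one_mul]
    ring_nf

theorem norm_iterated_integral_interpolation_sub_le (hn : 0 < n) (hε : ∀ j, ε j = 1 ∨ ε j = -1)
    (hH : ∀ k < n, ∀ u : ℝ, (k : ℝ) / n ≤ u → u ≤ ((k : ℝ) + 1) / n →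
      H u = ∑ i ∈ Finset.range k, ε i + n * ε k * (u - k / n))
    {k : ℕ} (hk : k < n) {t : ℝ} (ht₁ : (k : ℝ) / n ≤ t) (ht₂ : t < ((k : ℝ) + 1) / n) :
    ‖(∫ s in 0..t, ∫ u in 0..s, cexp (2 * π * I * H u)) -
        I * (((∑ i ∈ Finset.range k, ε i) / (2 * π * n ^ 2) : ℝ) : ℂ)‖ ≤ π⁻¹ / n ^ 2 := by
  have hn' : (n : ℂ) ≠ 0 := by exact_mod_cast hn.ne'
  have hterm : ∀ j, -((n : ℝ)⁻¹ : ℝ) / (2 * π * I * n * ε j) =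
      I * ((ε j / (2 * π * n ^ 2) : ℝ) : ℂ) := by
    intro j
    rcases hε j with h | h <;>
    · rw [h]; push_cast; field_simp; ring_nf; simp [I_sq]
  have hnorm : ‖2 * π * I * n * ε k‖ = 2 * π * n := by
    rcases hε k with h | h <;> simp [h, abs_of_pos pi_pos]
  calc _ = ‖(∫ s in 0..t, ∫ u in 0..s, cexp (2 * π * I * H u)) -
        ∑ j ∈ Finset.range k, -((n : ℝ)⁻¹ : ℝ) / (2 * π * I * n * ε j)‖ := by
        simp only [hterm, ← Finset.mul_sum, Finset.sum_div, Complex.ofReal_sum]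
    _ ≤ 2 / ‖2 * π * I * n * ε k‖ * (n : ℝ)⁻¹ :=
        (isPiecewiseCexp_of_interpolation hn hε hH).norm_integral_primitive_sub_sum_le hk
          ⟨by rwa [← div_eq_mul_inv], by rw [← div_eq_mul_inv]; exact ht₂.le⟩
    _ = π⁻¹ / n ^ 2 := by rw [hnorm]; field_simp

end LinearInterpolation

end

theorem iterated_exp_integral_random_walk_general
    {Ω : Type*}
    (X : ℕ → Ω → ℝ)
    (hpm : ∀ k ω, X k ω = 1 ∨ X k ω = -1)
    (H : ℕ → Ω → ℝ → ℝ)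
    (hH : ∀ n : ℕ, 1 ≤ n → ∀ (ω : Ω) (k : ℕ), k ≤ n - 1 → ∀ u : ℝ,
      (k : ℝ) / n ≤ u → u ≤ ((k : ℝ) + 1) / n →
      H n ω u = (∑ i ∈ Finset.range k, X (i + 1) ω) + n * X (k + 1) ω * (u - (k : ℝ) / n))
    :
    ∃ C : ℝ, 0 < C ∧ ∀ (n : ℕ), 1 ≤ n → ∀ (ω : Ω) (k : ℕ), k ≤ n - 1 → ∀ t : ℝ,
      (k : ℝ) / n ≤ t → t < ((k : ℝ) + 1) / n →
      ‖
        ((∫ s in (0:ℝ)..t, (∫ u in (0:ℝ)..s, Complex.exp (2 * π * Complex.I * H n ω u))) -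
          Complex.I * (((∑ i ∈ Finset.range k, X (i + 1) ω) / (2 * π * n ^ 2) : ℝ) : ℂ))‖ ≤
      C / n ^ 2 :=
  ⟨π⁻¹, by positivity, fun n hn ω k hk _ ht₁ ht₂ =>
    norm_iterated_integral_interpolation_sub_le hn (fun j => hpm (j + 1) ω)
      (fun j hj => hH n hn ω j (by omega)) (by omega) ht₁ ht₂⟩

/-- There is a constant `C > 0` such that for all `n ≥ 1`, `ω`, `0 ≤ k ≤ n−1`
and `t ∈ [k/n, (k+1)/n)`,
`|∫_0^t (∫_0^s e^{2πiH_n(ω,u)} du) ds − (i/(2πn²)) S_k(ω)| ≤ C/n²`. -/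
theorem iterated_exp_integral_random_walk
    {Ω : Type*} [MeasurableSpace Ω] (P : MeasureTheory.Measure Ω)
    [MeasureTheory.IsProbabilityMeasure P]
    (X : ℕ → Ω → ℝ) (hXmeas : ∀ k, Measurable (X k))
    (hiid : ProbabilityTheory.iIndepFun X P)
    (hdist : ∀ k, P {ω | X k ω = 1} = 1/2 ∧ P {ω | X k ω = -1} = 1/2)
    (hpm : ∀ k ω, X k ω = 1 ∨ X k ω = -1)
    (H : ℕ → Ω → ℝ → ℝ)
    (hH : ∀ n : ℕ, 1 ≤ n → ∀ (ω : Ω) (k : ℕ), k ≤ n - 1 → ∀ u : ℝ,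
      (k : ℝ) / n ≤ u → u ≤ ((k : ℝ) + 1) / n →
      H n ω u = (∑ i ∈ Finset.range k, X (i + 1) ω) + n * X (k + 1) ω * (u - (k : ℝ) / n))
    :
    ∃ C : ℝ, 0 < C ∧ ∀ (n : ℕ), 1 ≤ n → ∀ (ω : Ω) (k : ℕ), k ≤ n - 1 → ∀ t : ℝ,
      (k : ℝ) / n ≤ t → t < ((k : ℝ) + 1) / n →
      ‖
        ((∫ s in (0:ℝ)..t, (∫ u in (0:ℝ)..s, Complex.exp (2 * π * Complex.I * H n ω u))) -
          Complex.I * (((∑ i ∈ Finset.range k, X (i + 1) ω) / (2 * π * n ^ 2) : ℝ) : ℂ))‖ ≤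
      C / n ^ 2 :=
  iterated_exp_integral_random_walk_general X hpm H hH
end

section
/- For every positive integer n, every ω ∈ Ω and every t ∈ [0,1], one has | 2π n^{3/2} ∫_0^t ( ∫_0^s cos(2π H_n(ω,u)) du ) ds | ≤ 1/(π √n); in particular the processes 2π n^{3/2} ∫_0^t ∫_0^s cos(2π H_n(ω,u)) du ds converge to the zero process uniformly in t and ω as n → ∞. -/
/-! Since the increments are `±1`, `H_n` takes integer values at the nodes `k/n` and has
slope `±n` in between, so `cos (2π H_n(ω, u)) = cos (2π n u)` on `[0, 1]` for every `ω`
(cosine is even and `2π`-periodic). The double integral is therefore the deterministic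
`(1 - cos (2π n t)) / (2π n)²`, and multiplying by `2π n^{3/2}` gives at most `1 / (π √n)`. -/

open Real Set Filter Topology

lemma exists_int_eq_sum_of_eq_one_or_neg_one {ι : Type*} {s : Finset ι} {x : ι → ℝ}
    (hx : ∀ i ∈ s, x i = 1 ∨ x i = -1) : ∃ m : ℤ, ∑ i ∈ s, x i = m := by
  choose m hm using fun i (hi : i ∈ s) => show ∃ m : ℤ, x i = m by
    rcases hx i hi with h | h
    exacts [⟨1, by simp [h]⟩, ⟨-1, by simp [h]⟩]
  exact ⟨∑ i ∈ s.attach, m i.1 i.2, by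
    rw [Int.cast_sum, ← s.sum_attach]; exact Finset.sum_congr rfl fun i _ => hm i.1 i.2⟩

lemma exists_le_pred_div_le_le_succ_div {n : ℕ} (hn : 1 ≤ n) {u : ℝ} (hu : u ∈ Icc 0 1) :
    ∃ k ≤ n - 1, (k : ℝ) / n ≤ u ∧ u ≤ ((k : ℝ) + 1) / n := by
  have hn' : (0 : ℝ) < n := by exact_mod_cast hn
  refine ⟨min ⌊n * u⌋₊ (n - 1), min_le_right _ _, ?_, ?_⟩
  · rw [div_le_iff₀' hn']
    exact (Nat.cast_le.mpr (min_le_left _ _)).trans (Nat.floor_le (by nlinarith [hu.1]))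
  · rw [le_div_iff₀' hn']
    rcases min_choice ⌊n * u⌋₊ (n - 1) with h | h <;> rw [h]
    · exact (Nat.lt_floor_add_one _).le
    · rw [Nat.cast_sub hn, Nat.cast_one, sub_add_cancel]
      simpa using mul_le_mul_of_nonneg_left hu.2 hn'.le

lemma cos_two_pi_mul_int_add_sign_mul {m : ℤ} {e : ℝ} (he : e = 1 ∨ e = -1) (y : ℝ) :
    cos (2 * π * (m + e * y)) = cos (2 * π * y) := by
  rw [mul_add, add_comm, show 2 * π * (m : ℝ) = m * (2 * π) by ring, cos_add_int_mul_two_pi]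
  rcases he with rfl | rfl <;> simp

lemma integral_integral_cos_mul {c : ℝ} (hc : c ≠ 0) (t : ℝ) :
    ∫ s in (0 : ℝ)..t, ∫ u in (0 : ℝ)..s, cos (c * u) = (1 - cos (c * t)) / c ^ 2 := by
  have hinner : ∀ s : ℝ, ∫ u in (0 : ℝ)..s, cos (c * u) = c⁻¹ * sin (c * s) := by
    intro s
    simp [intervalIntegral.integral_comp_mul_left cos hc]
  simp only [hinner, intervalIntegral.integral_const_mul,
    intervalIntegral.integral_comp_mul_left sin hc, integral_sin, smul_eq_mul, mul_zero, cos_zero]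
  field_simp

section PiecewiseLinear

variable {n : ℕ} (hn : 1 ≤ n) {h : ℝ → ℝ} {x : ℕ → ℝ} (hx : ∀ i, x i = 1 ∨ x i = -1)
  (hh : ∀ k ≤ n - 1, ∀ u : ℝ, (k : ℝ) / n ≤ u → u ≤ ((k : ℝ) + 1) / n →
    h u = (∑ i ∈ Finset.range k, x (i + 1)) + n * x (k + 1) * (u - (k : ℝ) / n))
include hn hx hh

lemma cos_two_pi_mul_eq_of_piecewise_linear {u : ℝ} (hu : u ∈ Icc 0 1) :
    cos (2 * π * h u) = cos (2 * π * n * u) := by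
  obtain ⟨k, hk, hku, huk⟩ := exists_le_pred_div_le_le_succ_div hn hu
  obtain ⟨m, hm⟩ := exists_int_eq_sum_of_eq_one_or_neg_one fun i _ => hx (i + 1)
  have hn0 : (n : ℝ) ≠ 0 := by positivity
  have hlin : (n : ℝ) * x (k + 1) * (u - k / n) = x (k + 1) * (n * u - k) := by
    field_simp
  rw [hh k hk u hku huk, hm, hlin, cos_two_pi_mul_int_add_sign_mul (hx (k + 1)), mul_sub,
    show 2 * π * (k : ℝ) = (k : ℤ) * (2 * π) by push_cast; ring, cos_sub_int_mul_two_pi]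
  congr 1; ring

lemma integral_integral_cos_two_pi_mul_of_piecewise_linear {t : ℝ} (ht : t ∈ Icc 0 1) :
    ∫ s in (0 : ℝ)..t, ∫ u in (0 : ℝ)..s, cos (2 * π * h u)
      = (1 - cos (2 * π * n * t)) / (2 * π * n) ^ 2 := by
  have hcos : EqOn (fun u => cos (2 * π * h u)) (fun u => cos (2 * π * n * u)) (Icc 0 t) :=
    fun u hu => cos_two_pi_mul_eq_of_piecewise_linear hn hx hh ⟨hu.1, hu.2.trans ht.2⟩
  rw [← integral_integral_cos_mul (by positivity)]
  refine intervalIntegral.integral_congr fun s hs => intervalIntegral.integral_congr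
    fun u hu => hcos ?_
  rw [uIcc_of_le ht.1] at hs
  rw [uIcc_of_le hs.1] at hu
  exact ⟨hu.1, hu.2.trans hs.2⟩

end PiecewiseLinear

lemma abs_two_pi_mul_rpow_mul_one_sub_cos_div_le {n : ℝ} (hn : 0 < n) (y : ℝ) :
    |2 * π * n ^ ((3 : ℝ) / 2) * ((1 - cos y) / (2 * π * n) ^ 2)| ≤ 1 / (π * √n) := by
  obtain ⟨r, hr, rfl⟩ : ∃ r, 0 < r ∧ n = r ^ 2 := ⟨√n, sqrt_pos.mpr hn, (sq_sqrt hn.le).symm⟩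
  have hpow : (r ^ 2) ^ ((3 : ℝ) / 2) = r ^ 3 := by
    rw [← rpow_natCast, ← rpow_mul hr.le, ← rpow_natCast]; norm_num
  have hcos : 0 ≤ 1 - cos y := by linarith [cos_le_one y]
  rw [abs_of_nonneg (by positivity), hpow, sqrt_sq hr.le]
  calc 2 * π * r ^ 3 * ((1 - cos y) / (2 * π * r ^ 2) ^ 2)
      = (1 - cos y) / (2 * π * r) := by field_simp
    _ ≤ 2 / (2 * π * r) := by gcongr; linarith [neg_one_le_cos y]
    _ = 1 / (π * r) := by field_simp

lemma tendsto_one_div_pi_mul_sqrt_nat : Tendsto (fun n : ℕ => 1 / (π * √n)) atTop (𝓝 0) := by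
  simp only [one_div]
  exact ((tendsto_sqrt_atTop.comp tendsto_natCast_atTop_atTop).const_mul_atTop
    pi_pos).inv_tendsto_atTop

theorem scaled_cos_double_integral_vanishes_general
    {Ω : Type*}
    (X : ℕ → Ω → ℝ)
    (hpm : ∀ k ω, X k ω = 1 ∨ X k ω = -1)
    (H : ℕ → Ω → ℝ → ℝ)
    (hH : ∀ n : ℕ, 1 ≤ n → ∀ (ω : Ω) (k : ℕ), k ≤ n - 1 → ∀ u : ℝ,
      (k : ℝ) / n ≤ u → u ≤ ((k : ℝ) + 1) / n →
      H n ω u = (∑ i ∈ Finset.range k, X (i + 1) ω) + n * X (k + 1) ω * (u - (k : ℝ) / n))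
    :
    (∀ (n : ℕ), 1 ≤ n → ∀ (ω : Ω), ∀ t ∈ Set.Icc (0:ℝ) 1,
      |2 * π * (n : ℝ) ^ ((3:ℝ)/2) *
        ∫ s in (0:ℝ)..t, (∫ u in (0:ℝ)..s, Real.cos (2 * π * H n ω u))| ≤
      1 / (π * Real.sqrt n)) ∧
    (∀ ε : ℝ, 0 < ε → ∃ N : ℕ, ∀ n : ℕ, N ≤ n → ∀ (ω : Ω), ∀ t ∈ Set.Icc (0:ℝ) 1,
      |2 * π * (n : ℝ) ^ ((3:ℝ)/2) *
        ∫ s in (0:ℝ)..t, (∫ u in (0:ℝ)..s, Real.cos (2 * π * H n ω u))| ≤ ε) := by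
  have hbound : ∀ n : ℕ, 1 ≤ n → ∀ ω, ∀ t ∈ Icc (0 : ℝ) 1,
      |2 * π * (n : ℝ) ^ ((3 : ℝ) / 2) *
        ∫ s in (0 : ℝ)..t, ∫ u in (0 : ℝ)..s, cos (2 * π * H n ω u)| ≤ 1 / (π * √n) := by
    intro n hn ω t ht
    rw [integral_integral_cos_two_pi_mul_of_piecewise_linear hn (fun i => hpm i ω) (hH n hn ω) ht]
    exact abs_two_pi_mul_rpow_mul_one_sub_cos_div_le (by exact_mod_cast hn) _
  refine ⟨hbound, fun ε hε => ?_⟩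
  obtain ⟨N, hN⟩ := eventually_atTop.mp
    (tendsto_one_div_pi_mul_sqrt_nat.eventually (ge_mem_nhds hε))
  exact ⟨N + 1, fun n hn ω t ht =>
    (hbound n (by omega) ω t ht).trans (hN n (by omega))⟩

/-- For all `n ≥ 1`, `ω` and `t ∈ [0,1]`,
`|2πn^{3/2} ∫_0^t ∫_0^s cos(2πH_n(ω,u)) du ds| ≤ 1/(π√n)`; in particular these processes
converge to the zero process uniformly in `t` and `ω`. -/
theorem scaled_cos_double_integral_vanishes
    {Ω : Type*} [MeasurableSpace Ω] (P : MeasureTheory.Measure Ω)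
    [MeasureTheory.IsProbabilityMeasure P]
    (X : ℕ → Ω → ℝ) (hXmeas : ∀ k, Measurable (X k))
    (hiid : ProbabilityTheory.iIndepFun X P)
    (hdist : ∀ k, P {ω | X k ω = 1} = 1/2 ∧ P {ω | X k ω = -1} = 1/2)
    (hpm : ∀ k ω, X k ω = 1 ∨ X k ω = -1)
    (H : ℕ → Ω → ℝ → ℝ)
    (hH : ∀ n : ℕ, 1 ≤ n → ∀ (ω : Ω) (k : ℕ), k ≤ n - 1 → ∀ u : ℝ,
      (k : ℝ) / n ≤ u → u ≤ ((k : ℝ) + 1) / n →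
      H n ω u = (∑ i ∈ Finset.range k, X (i + 1) ω) + n * X (k + 1) ω * (u - (k : ℝ) / n))
    :
    (∀ (n : ℕ), 1 ≤ n → ∀ (ω : Ω), ∀ t ∈ Set.Icc (0:ℝ) 1,
      |2 * π * (n : ℝ) ^ ((3:ℝ)/2) *
        ∫ s in (0:ℝ)..t, (∫ u in (0:ℝ)..s, Real.cos (2 * π * H n ω u))| ≤
      1 / (π * Real.sqrt n)) ∧
    (∀ ε : ℝ, 0 < ε → ∃ N : ℕ, ∀ n : ℕ, N ≤ n → ∀ (ω : Ω), ∀ t ∈ Set.Icc (0:ℝ) 1,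
      |2 * π * (n : ℝ) ^ ((3:ℝ)/2) *
        ∫ s in (0:ℝ)..t, (∫ u in (0:ℝ)..s, Real.cos (2 * π * H n ω u))| ≤ ε) :=
  scaled_cos_double_integral_vanishes_general X hpm H hH
end

section
/- Let r : [0,1] → ℝ be continuously differentiable, let n ≥ 2 be an integer and let a ∈ [0, 1 − 1/n]. Then there exists ξ ∈ [a, a + 1/n] such that ∫_0^1 ( r(a + z/n) − r(a) ) sin(2πz) dz = − (1/(2πn)) r′(ξ). In particular this integral equals ∫_0^{1/2} ( r(a + z/n) − r(a + z/n + 1/(2n)) ) sin(2πz) dz. -/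
/-!
Since `sin (2π (z + 1/2)) = - sin (2π z)`, the integral over `[0, 1]` folds to an integral over
`[0, 1/2]` of the continuous difference `r (a + z/n) - r (a + z/n + 1/(2n))` against the
nonnegative weight `sin (2π z)`. The first mean value theorem for integrals replaces that
difference by its value at a single point, times `∫₀^{1/2} sin (2π z) = 1/π`, and Lagrange's mean
value theorem writes this value as `-r' ξ / (2n)`.
-/

open MeasureTheory Real Set

lemma sin_two_pi_mul_nonneg {z : ℝ} (hz : z ∈ Icc (0 : ℝ) (1 / 2)) : 0 ≤ sin (2 * π * z) :=
  sin_nonneg_of_nonneg_of_le_pi (by have := hz.1; positivity) (by nlinarith [hz.2, pi_pos])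

lemma integral_sin_two_pi_mul_zero_half : ∫ z in (0 : ℝ)..1 / 2, sin (2 * π * z) = 1 / π := by
  rw [intervalIntegral.integral_comp_mul_left sin (by positivity), integral_sin]
  have : 2 * π * (1 / 2 : ℝ) = π := by ring
  rw [this, mul_zero, cos_zero, cos_pi, smul_eq_mul]
  field_simp
  norm_num

lemma integral_mul_sin_two_pi_eq_integral_sub_shift {f : ℝ → ℝ}
    (hf : IntervalIntegrable f volume 0 1) :
    ∫ z in (0 : ℝ)..1, f z * sin (2 * π * z) =
      ∫ z in (0 : ℝ)..1 / 2, (f z - f (z + 1 / 2)) * sin (2 * π * z) := by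
  have hfs : IntervalIntegrable (fun z => f z * sin (2 * π * z)) volume 0 1 :=
    hf.mul_continuousOn (by fun_prop)
  have hsub : ∀ {c d : ℝ}, c ∈ uIcc (0 : ℝ) 1 → d ∈ uIcc (0 : ℝ) 1 →
      IntervalIntegrable (fun z => f z * sin (2 * π * z)) volume c d :=
    fun hc hd => hfs.mono_set (uIcc_subset_uIcc hc hd)
  have h0 : (0 : ℝ) ∈ uIcc (0 : ℝ) 1 := by simp
  have h1 : (1 : ℝ) ∈ uIcc (0 : ℝ) 1 := by simp
  have hhalf : (1 / 2 : ℝ) ∈ uIcc (0 : ℝ) 1 := by rw [uIcc_of_le zero_le_one]; norm_num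
  have hshift : IntervalIntegrable (fun z => f (z + 1 / 2) * sin (2 * π * (z + 1 / 2)))
      volume 0 (1 / 2) := by
    convert (hsub hhalf h1).comp_add_right (1 / 2) using 1 <;> norm_num
  calc ∫ z in (0 : ℝ)..1, f z * sin (2 * π * z)
      = (∫ z in (0 : ℝ)..1 / 2, f z * sin (2 * π * z)) +
          ∫ z in (0 : ℝ)..1 / 2, f (z + 1 / 2) * sin (2 * π * (z + 1 / 2)) := by
        rw [intervalIntegral.integral_comp_add_right (fun z => f z * sin (2 * π * z)),
          ← intervalIntegral.integral_add_adjacent_intervals (hsub h0 hhalf) (hsub hhalf h1)]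
        norm_num
    _ = ∫ z in (0 : ℝ)..1 / 2, (f z - f (z + 1 / 2)) * sin (2 * π * z) := by
        rw [← intervalIntegral.integral_add (hsub h0 hhalf) hshift]
        refine intervalIntegral.integral_congr fun z _ => ?_
        have : 2 * π * (z + 1 / 2) = 2 * π * z + π := by ring
        simp only [this, sin_add_pi]
        ring

lemma exists_mem_Ioo_sub_eq_mul_of_hasDerivWithinAt {r r' : ℝ → ℝ} {s : Set ℝ} {x y : ℝ}
    (hxy : x < y) (hs : Icc x y ⊆ s) (hr : ∀ u ∈ s, HasDerivWithinAt r (r' u) s u) :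
    ∃ c ∈ Ioo x y, r y - r x = (y - x) * r' c := by
  obtain ⟨c, hc, hslope⟩ := exists_hasDerivAt_eq_slope r r' hxy
    (fun u hu => ((hr u (hs hu)).continuousWithinAt).mono hs)
    (fun u hu => (hr u (hs (Ioo_subset_Icc_self hu))).hasDerivAt
      (Filter.mem_of_superset (Icc_mem_nhds hu.1 hu.2) hs))
  refine ⟨c, hc, ?_⟩
  rw [hslope]
  field_simp [(sub_pos.mpr hxy).ne']

lemma div_add_one_div_two_mul_le_one_div {n z : ℝ} (hn : 0 < n) (hz : z ≤ 1 / 2) :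
    z / n + 1 / (2 * n) ≤ 1 / n := by
  rw [div_add_div _ _ hn.ne' (by positivity), div_le_div_iff₀ (by positivity) hn]
  nlinarith [mul_pos hn hn]

lemma exists_integral_sub_shift_mul_sin_eq_deriv {r r' : ℝ → ℝ} {a n : ℝ} (hn : 0 < n)
    (hr : ∀ u ∈ Icc a (a + 1 / n), HasDerivWithinAt r (r' u) (Icc a (a + 1 / n)) u) :
    ∃ ξ ∈ Icc a (a + 1 / n),
      ∫ z in (0 : ℝ)..1 / 2, (r (a + z / n) - r (a + z / n + 1 / (2 * n))) * sin (2 * π * z) =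
        -(1 / (2 * π * n)) * r' ξ := by
  have hrc : ContinuousOn r (Icc a (a + 1 / n)) := fun u hu => (hr u hu).continuousWithinAt
  have hstep : 0 < 1 / (2 * n) := by positivity
  have hsub : ∀ z ∈ Icc (0 : ℝ) (1 / 2),
      Icc (a + z / n) (a + z / n + 1 / (2 * n)) ⊆ Icc a (a + 1 / n) := fun z hz =>
    Icc_subset_Icc (by linarith [div_nonneg hz.1 hn.le])
      (by linarith [div_add_one_div_two_mul_le_one_div hn hz.2])
  have hfc : ContinuousOn (fun z => r (a + z / n) - r (a + z / n + 1 / (2 * n)))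
      (uIcc 0 (1 / 2)) := by
    rw [uIcc_of_le (by norm_num)]
    refine (hrc.comp (by fun_prop) fun z hz => hsub z hz ?_).sub
      (hrc.comp (by fun_prop) fun z hz => hsub z hz ?_) <;>
      simp [hn.le]
  obtain ⟨z, hz, hz_eq⟩ := exists_eq_const_mul_intervalIntegral_of_nonneg (μ := volume) hfc
    (Continuous.intervalIntegrable (by fun_prop) _ _) fun z hz =>
      sin_two_pi_mul_nonneg (by rw [uIoc_of_le (by norm_num)] at hz; exact Ioc_subset_Icc_self hz)
  rw [uIcc_of_le (by norm_num)] at hz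
  obtain ⟨ξ, hξ, hmvt⟩ := exists_mem_Ioo_sub_eq_mul_of_hasDerivWithinAt
    (lt_add_of_pos_right _ hstep) (hsub z hz) hr
  refine ⟨ξ, hsub z hz (Ioo_subset_Icc_self hξ), ?_⟩
  rw [hz_eq, integral_sin_two_pi_mul_zero_half, ← neg_sub, hmvt, add_sub_cancel_left]
  field_simp

theorem mean_value_oscillatory_general
    (r r' : ℝ → ℝ)
    (hr : ∀ u ∈ Set.Icc (0:ℝ) 1, HasDerivWithinAt r (r' u) (Set.Icc 0 1) u)
    (n : ℕ) (hn : 2 ≤ n) (a : ℝ) (ha : a ∈ Set.Icc (0:ℝ) (1 - 1 / n)) :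
    (∃ ξ ∈ Set.Icc a (a + 1 / n),
      (∫ z in (0:ℝ)..1, (r (a + z / n) - r a) * Real.sin (2 * π * z)) =
        -(1 / (2 * π * n)) * r' ξ) ∧
    (∫ z in (0:ℝ)..1, (r (a + z / n) - r a) * Real.sin (2 * π * z)) =
      ∫ z in (0:ℝ)..(1/2 : ℝ),
        (r (a + z / n) - r (a + z / n + 1 / (2 * n))) * Real.sin (2 * π * z) := by
  have hn0 : (0 : ℝ) < n := by exact_mod_cast (by omega : 0 < n)
  have hJ : Icc a (a + 1 / n) ⊆ Icc 0 1 := Icc_subset_Icc ha.1 (by linarith [ha.2])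
  have hrJ : ∀ u ∈ Icc a (a + 1 / n), HasDerivWithinAt r (r' u) (Icc a (a + 1 / n)) u :=
    fun u hu => (hr u (hJ hu)).mono hJ
  have hfold : ∫ z in (0 : ℝ)..1, (r (a + z / n) - r a) * sin (2 * π * z) =
      ∫ z in (0 : ℝ)..1 / 2,
        (r (a + z / n) - r (a + z / n + 1 / (2 * n))) * sin (2 * π * z) := by
    have hrc : ContinuousOn r (Icc a (a + 1 / n)) := fun u hu => (hrJ u hu).continuousWithinAt
    have hf : IntervalIntegrable (fun z => r (a + z / n) - r a) volume 0 1 := by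
      refine ContinuousOn.intervalIntegrable_of_Icc zero_le_one
        ((hrc.comp (by fun_prop) fun z hz => ⟨?_, ?_⟩).sub continuousOn_const)
      · linarith [div_nonneg hz.1 hn0.le]
      · linarith [div_le_div_of_nonneg_right hz.2 hn0.le]
    rw [integral_mul_sin_two_pi_eq_integral_sub_shift hf]
    refine intervalIntegral.integral_congr fun z _ => ?_
    have : a + (z + 1 / 2) / n = a + z / n + 1 / (2 * n) := by field_simp; ring
    simp only [this]
    ring
  obtain ⟨ξ, hξ, hξ_eq⟩ := exists_integral_sub_shift_mul_sin_eq_deriv hn0 hrJ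
  exact ⟨⟨ξ, hξ, hfold.trans hξ_eq⟩, hfold⟩

/-- For `r` of class `C¹` on `[0,1]`, `n ≥ 2` and `a ∈ [0, 1 − 1/n]`, there is
`ξ ∈ [a, a + 1/n]` with `∫_0^1 (r(a + z/n) − r(a)) sin(2πz) dz = −r'(ξ)/(2πn)`; moreover
this integral equals `∫_0^{1/2} (r(a + z/n) − r(a + z/n + 1/(2n))) sin(2πz) dz`. -/
theorem mean_value_oscillatory
    (r r' : ℝ → ℝ)
    (hr : ∀ u ∈ Set.Icc (0:ℝ) 1, HasDerivWithinAt r (r' u) (Set.Icc 0 1) u)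
    (hr' : ContinuousOn r' (Set.Icc 0 1))
    (n : ℕ) (hn : 2 ≤ n) (a : ℝ) (ha : a ∈ Set.Icc (0:ℝ) (1 - 1 / n)) :
    (∃ ξ ∈ Set.Icc a (a + 1 / n),
      (∫ z in (0:ℝ)..1, (r (a + z / n) - r a) * Real.sin (2 * π * z)) =
        -(1 / (2 * π * n)) * r' ξ) ∧
    (∫ z in (0:ℝ)..1, (r (a + z / n) - r a) * Real.sin (2 * π * z)) =
      ∫ z in (0:ℝ)..(1/2 : ℝ),
        (r (a + z / n) - r (a + z / n + 1 / (2 * n))) * Real.sin (2 * π * z) :=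
  mean_value_oscillatory_general r r' hr n hn a ha
end

section
/- Define the random Nash twist f_n(ω, t) = f_0(0) + ∫_0^t [ f_0′(u) + r(u)( Y(u) cos(2π H_n(ω,u)) + Z(u) sin(2π H_n(ω,u)) ) ] du. Then there is a constant C, depending only on the sup norms of r, Y, Z and of their first derivatives, such that sup_{t∈[0,1]} ‖f_n(ω, t) − f_0(t)‖ ≤ C/n for every positive integer n and every ω ∈ Ω. Moreover, for each ω, the curve t ↦ f_n(ω,t) satisfies ‖∂_t f_n(ω,t)‖² = g(t) for almost every t ∈ [0,1] (f_n is isometric for the metric g·du²). -/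
open MeasureTheory Real

open Set

lemma aux_exists_lip {E : Type*} [NormedAddCommGroup E] [NormedSpace ℝ E]
    (V : ℝ → E) (hV : ContDiffOn ℝ 1 V (Set.Icc 0 1)) :
    ∃ K : NNReal, LipschitzOnWith K V (Set.Icc 0 1) := by
  have hu : UniqueDiffOn ℝ (Set.Icc (0:ℝ) 1) := uniqueDiffOn_Icc one_pos
  have hdiff : DifferentiableOn ℝ V (Set.Icc 0 1) := hV.differentiableOn one_ne_zero
  have hcont : ContinuousOn (fderivWithin ℝ V (Set.Icc 0 1)) (Set.Icc 0 1) :=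
    hV.continuousOn_fderivWithin hu le_rfl
  obtain ⟨C, hC⟩ := isCompact_Icc.exists_bound_of_continuousOn hcont
  refine ⟨C.toNNReal, (convex_Icc 0 1).lipschitzOnWith_of_nnnorm_hasFDerivWithin_le
    (fun x hx => (hdiff x hx).hasFDerivWithinAt) (fun x hx => ?_)⟩
  rw [← norm_toNNReal]
  exact Real.toNNReal_mono (hC x hx)

lemma aux_per (s ε : ℝ) (hε : ε = 1 ∨ ε = -1) (n : ℕ) (hn : 1 ≤ n) (a : ℝ) :
    (∫ u in a..(a + 1/(n:ℝ)), Real.cos (2*π*(s + ε*(n:ℝ)*(u - a)))) = 0 ∧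
    (∫ u in a..(a + 1/(n:ℝ)), Real.sin (2*π*(s + ε*(n:ℝ)*(u - a)))) = 0 := by
  have hn0 : (n:ℝ) ≠ 0 := Nat.cast_ne_zero.mpr (by omega)
  have hε0 : ε ≠ 0 := by rcases hε with h | h <;> rw [h] <;> norm_num
  set c := 2*π*ε*(n:ℝ) with hc
  set d := 2*π*s - c*a with hd
  have hcne : c ≠ 0 := by
    apply mul_ne_zero (mul_ne_zero (by positivity) hε0) hn0
  have hkey : ∀ u, 2*π*(s + ε*(n:ℝ)*(u - a)) = c*u + d := by
    intro u; rw [hc, hd]; ring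
  have hend : c*(a + 1/(n:ℝ)) + d = (c*a + d) + 2*π*ε := by
    field_simp [hc, hd]; ring
  constructor
  · rw [intervalIntegral.integral_congr
      (g := fun u => Real.cos (c*u + d)) (fun u _ => by rw [hkey u])]
    rw [intervalIntegral.integral_comp_mul_add Real.cos hcne d, integral_cos, hend]
    rcases hε with h | h <;> rw [h] <;>
      simp [Real.sin_add_two_pi, Real.sin_sub_two_pi, mul_neg, ← sub_eq_add_neg]
  · rw [intervalIntegral.integral_congr
      (g := fun u => Real.sin (c*u + d)) (fun u _ => by rw [hkey u])]
    rw [intervalIntegral.integral_comp_mul_add Real.sin hcne d, integral_sin, hend]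
    rcases hε with h | h <;> rw [h] <;>
      simp [Real.cos_add_two_pi, Real.cos_sub_two_pi, mul_neg, ← sub_eq_add_neg]

lemma aux_osc {E : Type*} [NormedAddCommGroup E] [NormedSpace ℝ E] [CompleteSpace E]
    (V : ℝ → E) (K : NNReal) (a b : ℝ) (hab : a ≤ b)
    (hV : LipschitzOnWith K V (Set.Icc a b)) (T : ℝ → ℝ) (hTc : Continuous T)
    (hT1 : ∀ u, |T u| ≤ 1) (hT0 : (∫ u in a..b, T u) = 0) :
    ‖∫ u in a..b, T u • V u‖ ≤ (K:ℝ) * (b - a)^2 := by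
  have hVc : ContinuousOn V (Set.Icc a b) := hV.continuousOn
  have hI1 : IntervalIntegrable (fun u => T u • (V u - V a)) volume a b := by
    apply ContinuousOn.intervalIntegrable
    rw [Set.uIcc_of_le hab]
    exact hTc.continuousOn.smul (hVc.sub continuousOn_const)
  have hI2 : IntervalIntegrable (fun u => T u • V a) volume a b :=
    (hTc.smul continuous_const).intervalIntegrable a b
  have hsplit : (∫ u in a..b, T u • V u)
      = (∫ u in a..b, T u • (V u - V a)) + ∫ u in a..b, T u • V a := by
    rw [← intervalIntegral.integral_add hI1 hI2]
    apply intervalIntegral.integral_congr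
    intro u _; simp [smul_sub]
  have h2 : (∫ u in a..b, T u • V a) = 0 := by
    rw [intervalIntegral.integral_smul_const, hT0, zero_smul]
  rw [hsplit, h2, add_zero]
  have hb : ∀ x ∈ Set.uIoc a b, ‖T x • (V x - V a)‖ ≤ (K:ℝ) * (b - a) := by
    intro x hx
    rw [Set.uIoc_of_le hab] at hx
    have hxI : x ∈ Set.Icc a b := ⟨hx.1.le, hx.2⟩
    have haI : a ∈ Set.Icc a b := ⟨le_rfl, hab⟩
    have h1 : ‖V x - V a‖ ≤ (K:ℝ) * (b - a) := by
      have := hV.dist_le_mul x hxI a haI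
      rw [dist_eq_norm] at this
      refine this.trans ?_
      have : dist x a ≤ b - a := by
        rw [Real.dist_eq, abs_of_nonneg (by linarith [hx.1.le])]
        linarith [hx.2]
      nlinarith [NNReal.coe_nonneg K]
    calc ‖T x • (V x - V a)‖ = |T x| * ‖V x - V a‖ := by rw [norm_smul, Real.norm_eq_abs]
      _ ≤ 1 * ((K:ℝ) * (b - a)) := by
          apply mul_le_mul (hT1 x) h1 (norm_nonneg _) zero_le_one
      _ = (K:ℝ) * (b - a) := one_mul _
  calc ‖∫ u in a..b, T u • (V u - V a)‖ ≤ (K:ℝ) * (b - a) * |b - a| :=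
        intervalIntegral.norm_integral_le_of_norm_le_const hb
    _ = (K:ℝ) * (b - a)^2 := by rw [abs_of_nonneg (by linarith)]; ring

lemma aux_piece {E : Type*} [NormedAddCommGroup E] [NormedSpace ℝ E] [CompleteSpace E]
    (V W : ℝ → E) (KV KW : NNReal)
    (hV : LipschitzOnWith KV V (Set.Icc 0 1)) (hW : LipschitzOnWith KW W (Set.Icc 0 1))
    (h : ℝ → ℝ) (s ε : ℝ) (hε : ε = 1 ∨ ε = -1) (n : ℕ) (hn : 1 ≤ n) (a : ℝ)
    (ha : 0 ≤ a) (hb1 : a + 1/(n:ℝ) ≤ 1)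
    (hh : ∀ u ∈ Set.Icc a (a + 1/(n:ℝ)), h u = s + ε*(n:ℝ)*(u - a))
    (ψ : ℝ → E)
    (hψ : ∀ u ∈ Set.Icc a (a + 1/(n:ℝ)),
      ψ u = Real.cos (2*π*h u) • V u + Real.sin (2*π*h u) • W u) :
    ContinuousOn ψ (Set.Icc a (a + 1/(n:ℝ))) ∧
    ‖∫ u in a..(a + 1/(n:ℝ)), ψ u‖ ≤ ((KV:ℝ) + (KW:ℝ)) * (1/(n:ℝ))^2 := by
  have hnpos : (0:ℝ) < n := by exact_mod_cast hn
  have hab : a ≤ a + 1/(n:ℝ) := by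
    have : (0:ℝ) < 1/(n:ℝ) := by positivity
    linarith
  have hsub : Set.Icc a (a + 1/(n:ℝ)) ⊆ Set.Icc (0:ℝ) 1 := Set.Icc_subset_Icc ha hb1
  set Tc : ℝ → ℝ := fun u => Real.cos (2*π*(s + ε*(n:ℝ)*(u - a))) with hTc
  set Ts : ℝ → ℝ := fun u => Real.sin (2*π*(s + ε*(n:ℝ)*(u - a))) with hTs
  have hTcc : Continuous Tc := by fun_prop
  have hTsc : Continuous Ts := by fun_prop
  have hχcont : ContinuousOn (fun u => Tc u • V u + Ts u • W u)
      (Set.Icc a (a + 1/(n:ℝ))) :=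
    ((hTcc.continuousOn.smul (hV.continuousOn.mono hsub)).add
      (hTsc.continuousOn.smul (hW.continuousOn.mono hsub)))
  have hEq : Set.EqOn ψ (fun u => Tc u • V u + Ts u • W u) (Set.Icc a (a + 1/(n:ℝ))) := by
    intro u hu
    rw [hψ u hu, hh u hu]
  refine ⟨hχcont.congr hEq, ?_⟩
  rw [intervalIntegral.integral_congr (by rwa [Set.uIcc_of_le hab] : Set.EqOn ψ _ _)]
  have hI1 : IntervalIntegrable (fun u => Tc u • V u) volume a (a + 1/(n:ℝ)) := by
    apply ContinuousOn.intervalIntegrable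
    rw [Set.uIcc_of_le hab]
    exact hTcc.continuousOn.smul (hV.continuousOn.mono hsub)
  have hI2 : IntervalIntegrable (fun u => Ts u • W u) volume a (a + 1/(n:ℝ)) := by
    apply ContinuousOn.intervalIntegrable
    rw [Set.uIcc_of_le hab]
    exact hTsc.continuousOn.smul (hW.continuousOn.mono hsub)
  rw [intervalIntegral.integral_add hI1 hI2]
  have hosc1 : ‖∫ u in a..(a + 1/(n:ℝ)), Tc u • V u‖ ≤ (KV:ℝ) * ((a + 1/(n:ℝ)) - a)^2 :=
    aux_osc V KV a (a + 1/(n:ℝ)) hab (hV.mono hsub) Tc hTcc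
      (fun u => Real.abs_cos_le_one _) (aux_per s ε hε n hn a).1
  have hosc2 : ‖∫ u in a..(a + 1/(n:ℝ)), Ts u • W u‖ ≤ (KW:ℝ) * ((a + 1/(n:ℝ)) - a)^2 :=
    aux_osc W KW a (a + 1/(n:ℝ)) hab (hW.mono hsub) Ts hTsc
      (fun u => Real.abs_sin_le_one _) (aux_per s ε hε n hn a).2
  have hba : (a + 1/(n:ℝ)) - a = 1/(n:ℝ) := by ring
  rw [hba] at hosc1 hosc2
  calc ‖(∫ u in a..(a + 1/(n:ℝ)), Tc u • V u) + ∫ u in a..(a + 1/(n:ℝ)), Ts u • W u‖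
      ≤ ‖∫ u in a..(a + 1/(n:ℝ)), Tc u • V u‖ + ‖∫ u in a..(a + 1/(n:ℝ)), Ts u • W u‖ :=
        norm_add_le _ _
    _ ≤ (KV:ℝ) * (1/(n:ℝ))^2 + (KW:ℝ) * (1/(n:ℝ))^2 := add_le_add hosc1 hosc2
    _ = ((KV:ℝ) + (KW:ℝ)) * (1/(n:ℝ))^2 := by ring

/-- The random Nash twist
`f_n(ω,t) = f0 0 + ∫_0^t (f0' u + r u • (cos(2πH_n(ω,u)) • Y u + sin(2πH_n(ω,u)) • Z u)) du`
satisfies `sup_t ‖f_n(ω,t) − f0 t‖ ≤ C/n` uniformly in `ω` for a constant `C`, and for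
each `ω` it is isometric for the metric `g·du²`: `‖∂_t f_n(ω,t)‖² = g t` for a.e. `t`. -/
theorem random_nash_twist_C0_close_and_isometric
    (g : ℝ → ℝ) (hg : ContDiffOn ℝ (⊤ : ℕ∞) g (Set.Icc 0 1))
    (hgpos : ∀ u ∈ Set.Icc (0:ℝ) 1, 0 < g u)
    (f0 f0' : ℝ → EuclideanSpace ℝ (Fin 3))
    (hf0 : ContDiffOn ℝ (⊤ : ℕ∞) f0 (Set.Icc 0 1))
    (hf0' : ∀ u ∈ Set.Icc (0:ℝ) 1, HasDerivWithinAt f0 (f0' u) (Set.Icc 0 1) u)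
    (hf0'cont : ContinuousOn f0' (Set.Icc 0 1))
    (hshort : ∀ u ∈ Set.Icc (0:ℝ) 1, 0 < ‖f0' u‖ ∧ ‖f0' u‖ < Real.sqrt (g u))
    (r : ℝ → ℝ) (hrdef : ∀ u, r u = Real.sqrt (g u - ‖f0' u‖ ^ 2))
    (Y Z : ℝ → EuclideanSpace ℝ (Fin 3))
    (hY : ContDiffOn ℝ (⊤ : ℕ∞) Y (Set.Icc 0 1)) (hZ : ContDiffOn ℝ (⊤ : ℕ∞) Z (Set.Icc 0 1))
    (honb : ∀ u ∈ Set.Icc (0:ℝ) 1,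
      ‖Y u‖ = 1 ∧ ‖Z u‖ = 1 ∧ inner ℝ (Y u) (Z u) = (0:ℝ) ∧
      inner ℝ (f0' u) (Y u) = (0:ℝ) ∧ inner ℝ (f0' u) (Z u) = (0:ℝ))
    {Ω : Type*} [MeasurableSpace Ω] (P : MeasureTheory.Measure Ω)
    [MeasureTheory.IsProbabilityMeasure P]
    (X : ℕ → Ω → ℝ) (hXmeas : ∀ k, Measurable (X k))
    (hiid : ProbabilityTheory.iIndepFun X P)
    (hdist : ∀ k, P {ω | X k ω = 1} = 1/2 ∧ P {ω | X k ω = -1} = 1/2)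
    (hpm : ∀ k ω, X k ω = 1 ∨ X k ω = -1)
    (H : ℕ → Ω → ℝ → ℝ)
    (hH : ∀ n : ℕ, 1 ≤ n → ∀ (ω : Ω) (k : ℕ), k ≤ n - 1 → ∀ u : ℝ,
      (k : ℝ) / n ≤ u → u ≤ ((k : ℝ) + 1) / n →
      H n ω u = (∑ i ∈ Finset.range k, X (i + 1) ω) + n * X (k + 1) ω * (u - (k : ℝ) / n))
    (fn : ℕ → Ω → ℝ → EuclideanSpace ℝ (Fin 3))
    (hfn : ∀ (n : ℕ) (ω : Ω) (t : ℝ), fn n ω t = f0 0 + ∫ u in (0:ℝ)..t,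
      (f0' u + r u • (Real.cos (2 * π * H n ω u) • Y u +
        Real.sin (2 * π * H n ω u) • Z u))) :
    ∃ C : ℝ, 0 ≤ C ∧ ∀ n : ℕ, 1 ≤ n → ∀ ω : Ω,
      (∀ t ∈ Set.Icc (0:ℝ) 1, ‖fn n ω t - f0 t‖ ≤ C / n) ∧
      (∀ᵐ t ∂(volume.restrict (Set.Icc (0:ℝ) 1)),
        ∃ d : EuclideanSpace ℝ (Fin 3),
          HasDerivAt (fn n ω) d t ∧ ‖d‖ ^ 2 = g t) := by
  classical
  have huD : UniqueDiffOn ℝ (Set.Icc (0:ℝ) 1) := uniqueDiffOn_Icc one_pos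
  have hf0'eq : ∀ u ∈ Set.Icc (0:ℝ) 1, f0' u = derivWithin f0 (Set.Icc 0 1) u :=
    fun u hu => ((hf0' u hu).derivWithin (huD u hu)).symm
  have hf0'C1 : ContDiffOn ℝ 1 f0' (Set.Icc 0 1) :=
    (hf0.derivWithin huD (WithTop.coe_le_coe.mpr le_top)).congr hf0'eq
  have hqpos : ∀ u ∈ Set.Icc (0:ℝ) 1, 0 < g u - ‖f0' u‖^2 := by
    intro u hu
    have h1 := (hshort u hu).2
    have h2 : ‖f0' u‖^2 < Real.sqrt (g u)^2 :=
      pow_lt_pow_left₀ h1 (norm_nonneg _) two_ne_zero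
    rw [Real.sq_sqrt (hgpos u hu).le] at h2
    linarith
  have hrsq : ∀ u ∈ Set.Icc (0:ℝ) 1, r u ^ 2 = g u - ‖f0' u‖^2 := by
    intro u hu; rw [hrdef u]; exact Real.sq_sqrt (hqpos u hu).le
  have hq1 : ContDiffOn ℝ 1 (fun u => g u - ‖f0' u‖^2) (Set.Icc 0 1) := by
    have h := (hg.of_le (by exact_mod_cast le_top)).sub (hf0'C1.inner ℝ hf0'C1)
    exact h.congr fun u _ => by rw [real_inner_self_eq_norm_sq]
  have hr1 : ContDiffOn ℝ 1 r (Set.Icc 0 1) :=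
    (hq1.sqrt fun u hu => (hqpos u hu).ne').congr fun u _ => hrdef u
  obtain ⟨KV, hKV⟩ := aux_exists_lip (fun u => r u • Y u) (hr1.smul (hY.of_le (by simp)))
  obtain ⟨KW, hKW⟩ := aux_exists_lip (fun u => r u • Z u) (hr1.smul (hZ.of_le (by simp)))
  obtain ⟨R, hR⟩ := isCompact_Icc.exists_bound_of_continuousOn hr1.continuousOn
  have hR0 : (0:ℝ) ≤ R := le_trans (norm_nonneg (r 0)) (hR 0 (by norm_num))
  refine ⟨(KV:ℝ) + (KW:ℝ) + 2*R, by positivity, ?_⟩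
  intro n hn ω
  have hnR : (0:ℝ) < n := by exact_mod_cast hn
  have hn0 : (n:ℝ) ≠ 0 := hnR.ne'
  set ψ : ℝ → EuclideanSpace ℝ (Fin 3) := fun u =>
    r u • (Real.cos (2 * π * H n ω u) • Y u + Real.sin (2 * π * H n ω u) • Z u) with hψdef
  have hpc : ∀ k : ℕ, k < n →
      ContinuousOn ψ (Set.Icc ((k:ℝ)/n) ((k:ℝ)/n + 1/n)) ∧
      ‖∫ u in ((k:ℝ)/n)..((k:ℝ)/n + 1/n), ψ u‖ ≤ ((KV:ℝ) + (KW:ℝ)) * (1/(n:ℝ))^2 := by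
    intro k hk
    have hk1n : ((k:ℝ)+1)/n ≤ 1 := by
      rw [div_le_one hnR]
      exact_mod_cast (by omega : k + 1 ≤ n)
    have heq : (k:ℝ)/n + 1/n = ((k:ℝ)+1)/n := by ring
    apply aux_piece (fun u => r u • Y u) (fun u => r u • Z u) KV KW hKV hKW (H n ω)
      (∑ i ∈ Finset.range k, X (i+1) ω) (X (k+1) ω) (hpm (k+1) ω) n hn ((k:ℝ)/n)
      (by positivity) (by rw [heq]; exact hk1n) ?_ ψ ?_
    · intro u hu
      rw [hH n hn ω k (by omega) u hu.1 (by rw [← heq]; exact hu.2)]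
      ring
    · intro u _
      simp only [hψdef]
      rw [smul_add]
      rw [smul_comm (r u), smul_comm (r u)]
  have hsubp : ∀ k : ℕ, k < n →
      Set.Icc ((k:ℝ)/n) ((k:ℝ)/n + 1/n) ⊆ Set.Icc (0:ℝ) 1 := by
    intro k hk
    apply Set.Icc_subset_Icc (by positivity)
    rw [show (k:ℝ)/n + 1/n = ((k:ℝ)+1)/n by ring, div_le_one hnR]
    exact_mod_cast (by omega : k + 1 ≤ n)
  have hψint : ∀ k : ℕ, k < n →
      IntervalIntegrable ψ volume ((k:ℝ)/n) ((k:ℝ)/n + 1/n) := by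
    intro k hk
    apply ContinuousOn.intervalIntegrable
    have hle : (k:ℝ)/n ≤ (k:ℝ)/n + 1/n := by
      have h1 : (0:ℝ) < 1/(n:ℝ) := by positivity
      linarith
    rw [Set.uIcc_of_le hle]
    exact (hpc k hk).1
  have hInt01 : IntervalIntegrable ψ volume 0 1 := by
    have h := IntervalIntegrable.trans_iterate (a := fun k : ℕ => (k:ℝ)/n) (n := n)
      (f := ψ) (μ := volume) (fun k hk => by
        have h2 : ((k+1:ℕ):ℝ)/n = (k:ℝ)/n + 1/n := by push_cast; ring
        simp only [h2]
        exact hψint k hk)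
    simpa [div_self hn0] using h
  have hIntt : ∀ t ∈ Set.Icc (0:ℝ) 1, IntervalIntegrable ψ volume 0 t := by
    intro t ht
    apply hInt01.mono_set
    rw [Set.uIcc_of_le ht.1, Set.uIcc_of_le zero_le_one]
    exact Set.Icc_subset_Icc le_rfl ht.2
  have hIf0' : ∀ t ∈ Set.Icc (0:ℝ) 1, IntervalIntegrable f0' volume 0 t := by
    intro t ht
    exact (hf0'cont.mono (Set.Icc_subset_Icc le_rfl ht.2)).intervalIntegrable_of_Icc ht.1
  have hfn'' : ∀ t : ℝ, fn n ω t = f0 0 + ∫ u in (0:ℝ)..t, (f0' u + ψ u) := by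
    intro t
    simp only [hψdef]
    exact hfn n ω t
  have hψbound : ∀ x ∈ Set.Icc (0:ℝ) 1, ‖ψ x‖ ≤ 2 * R := by
    intro x hx
    obtain ⟨hY1, hZ1, _, _, _⟩ := honb x hx
    have h1 : ψ x = r x • (Real.cos (2 * π * H n ω x) • Y x +
        Real.sin (2 * π * H n ω x) • Z x) := by rw [hψdef]
    rw [h1, norm_smul]
    have h2 : ‖Real.cos (2 * π * H n ω x) • Y x + Real.sin (2 * π * H n ω x) • Z x‖ ≤ 2 := by
      calc ‖Real.cos (2 * π * H n ω x) • Y x + Real.sin (2 * π * H n ω x) • Z x‖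
          ≤ ‖Real.cos (2 * π * H n ω x) • Y x‖ + ‖Real.sin (2 * π * H n ω x) • Z x‖ :=
            norm_add_le _ _
        _ ≤ 1 + 1 := by
            rw [norm_smul, norm_smul, hY1, hZ1, mul_one, mul_one, Real.norm_eq_abs,
              Real.norm_eq_abs]
            exact add_le_add (Real.abs_cos_le_one _) (Real.abs_sin_le_one _)
        _ = 2 := by norm_num
    calc ‖r x‖ * ‖_‖ ≤ R * 2 := mul_le_mul (hR x hx) h2 (norm_nonneg _) hR0
      _ = 2 * R := by ring
  constructor
  · -- C⁰ estimate
    intro t ht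
    set m := ⌊(n:ℝ)*t⌋₊ with hm
    have hnt0 : (0:ℝ) ≤ (n:ℝ)*t := mul_nonneg hnR.le ht.1
    have hmle : (m:ℝ) ≤ (n:ℝ)*t := Nat.floor_le hnt0
    have hmn : m ≤ n := by
      have h1 : (n:ℝ)*t ≤ ((n:ℕ):ℝ) := by nlinarith [ht.2]
      calc m ≤ ⌊((n:ℕ):ℝ)⌋₊ := Nat.floor_mono h1
        _ = n := Nat.floor_natCast n
    have hm1 : (m:ℝ)/n ≤ t := by
      rw [div_le_iff₀ hnR]
      linarith [mul_comm (n:ℝ) t]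
    have hm2 : t - (m:ℝ)/n ≤ 1/n := by
      have h := Nat.lt_floor_add_one ((n:ℝ)*t)
      rw [sub_le_iff_le_add, ← add_div, le_div_iff₀ hnR]
      push_cast
      linarith [mul_comm (n:ℝ) t, mul_comm t (n:ℝ)]
    have hIψ0m : IntervalIntegrable ψ volume 0 ((m:ℝ)/n) := by
      apply hInt01.mono_set
      rw [Set.uIcc_of_le (by positivity), Set.uIcc_of_le zero_le_one]
      exact Set.Icc_subset_Icc le_rfl (by rw [div_le_one hnR]; exact_mod_cast hmn)
    have hIψmt : IntervalIntegrable ψ volume ((m:ℝ)/n) t := by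
      apply hInt01.mono_set
      rw [Set.uIcc_of_le hm1, Set.uIcc_of_le zero_le_one]
      exact Set.Icc_subset_Icc (by positivity) ht.2
    have hFTC : (∫ u in (0:ℝ)..t, f0' u) = f0 t - f0 0 := by
      apply intervalIntegral.integral_eq_sub_of_hasDeriv_right_of_le ht.1
      · exact hf0.continuousOn.mono (Set.Icc_subset_Icc le_rfl ht.2)
      · intro x hx
        have hxI : x ∈ Set.Icc (0:ℝ) 1 := ⟨hx.1.le, (hx.2.le).trans ht.2⟩
        have hlt : x < 1 := lt_of_lt_of_le hx.2 ht.2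
        exact ((hf0' x hxI).hasDerivAt (Icc_mem_nhds hx.1 hlt)).hasDerivWithinAt
      · exact hIf0' t ht
    have hdiff : fn n ω t - f0 t = ∫ u in (0:ℝ)..t, ψ u := by
      rw [hfn'' t, intervalIntegral.integral_add (hIf0' t ht) (hIntt t ht), hFTC]
      abel
    rw [hdiff]
    have hsplit2 : (∫ u in (0:ℝ)..t, ψ u)
        = (∫ u in (0:ℝ)..((m:ℝ)/n), ψ u) + ∫ u in ((m:ℝ)/n)..t, ψ u :=
      (intervalIntegral.integral_add_adjacent_intervals hIψ0m hIψmt).symm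
    have hsum : ‖∫ u in (0:ℝ)..((m:ℝ)/n), ψ u‖
        ≤ (m:ℝ) * (((KV:ℝ) + (KW:ℝ)) * (1/(n:ℝ))^2) := by
      have he := (intervalIntegral.sum_integral_adjacent_intervals
        (a := fun k : ℕ => (k:ℝ)/n) (μ := volume) (f := ψ) (n := m)
        (fun k hk => by
          have h2 : ((k+1:ℕ):ℝ)/n = (k:ℝ)/n + 1/n := by push_cast; ring
          simp only [h2]
          exact hψint k (lt_of_lt_of_le hk hmn))).symm
      simp only [Nat.cast_zero, zero_div] at he
      rw [he]
      calc ‖∑ k ∈ Finset.range m, ∫ u in ((k:ℕ):ℝ)/n..(((k+1:ℕ)):ℝ)/n, ψ u‖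
          ≤ ∑ k ∈ Finset.range m, ‖∫ u in ((k:ℕ):ℝ)/n..(((k+1:ℕ)):ℝ)/n, ψ u‖ :=
            norm_sum_le _ _
        _ ≤ ∑ k ∈ Finset.range m, ((KV:ℝ) + (KW:ℝ)) * (1/(n:ℝ))^2 := by
            apply Finset.sum_le_sum
            intro k hk
            have h2 : ((k+1:ℕ):ℝ)/n = (k:ℝ)/n + 1/n := by push_cast; ring
            rw [h2]
            exact (hpc k (lt_of_lt_of_le (Finset.mem_range.mp hk) hmn)).2
        _ = (m:ℝ) * (((KV:ℝ) + (KW:ℝ)) * (1/(n:ℝ))^2) := by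
            rw [Finset.sum_const, Finset.card_range, nsmul_eq_mul]
    have hpart : ‖∫ u in ((m:ℝ)/n)..t, ψ u‖ ≤ 2*R * (1/(n:ℝ)) := by
      have hb := intervalIntegral.norm_integral_le_of_norm_le_const
        (C := 2*R) (f := ψ) (a := (m:ℝ)/n) (b := t) ?_
      · refine hb.trans ?_
        rw [abs_of_nonneg (by linarith)]
        have h2R : (0:ℝ) ≤ 2*R := by linarith
        exact mul_le_mul_of_nonneg_left hm2 h2R
      · intro x hx
        rw [Set.uIoc_of_le hm1] at hx
        exact hψbound x ⟨le_trans (by positivity) hx.1.le, hx.2.trans ht.2⟩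
    calc ‖∫ u in (0:ℝ)..t, ψ u‖
        ≤ ‖∫ u in (0:ℝ)..((m:ℝ)/n), ψ u‖ + ‖∫ u in ((m:ℝ)/n)..t, ψ u‖ := by
          rw [hsplit2]; exact norm_add_le _ _
      _ ≤ (m:ℝ) * (((KV:ℝ) + (KW:ℝ)) * (1/(n:ℝ))^2) + 2*R * (1/(n:ℝ)) :=
          add_le_add hsum hpart
      _ ≤ (n:ℝ) * (((KV:ℝ) + (KW:ℝ)) * (1/(n:ℝ))^2) + 2*R * (1/(n:ℝ)) := by
          have : (m:ℝ) ≤ (n:ℝ) := by exact_mod_cast hmn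
          have hpos : (0:ℝ) ≤ ((KV:ℝ) + (KW:ℝ)) * (1/(n:ℝ))^2 := by positivity
          nlinarith
      _ = ((KV:ℝ) + (KW:ℝ) + 2*R) / n := by field_simp
  · -- isometry a.e.
    set bad : Set ℝ := ((fun k : ℕ => (k:ℝ)/n) '' (Set.Iic n)) ∪ {0, 1} with hbaddef
    have hbadfin : bad.Finite :=
      (((Set.finite_Iic n).image _)).union ((Set.finite_singleton (1:ℝ)).insert 0)
    have hbad0 : (volume.restrict (Set.Icc (0:ℝ) 1)) bad = 0 := by
      rw [Measure.restrict_apply' measurableSet_Icc]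
      exact measure_mono_null Set.inter_subset_left (hbadfin.measure_zero _)
    filter_upwards [ae_restrict_mem measurableSet_Icc,
      measure_eq_zero_iff_ae_notMem.mp hbad0] with t ht htbad
    have ht0 : 0 < t := by
      rcases eq_or_lt_of_le ht.1 with h | h
      · exact absurd (Or.inr (by rw [← h]; simp) : t ∈ bad) htbad
      · exact h
    have ht1 : t < 1 := by
      rcases eq_or_lt_of_le ht.2 with h | h
      · exact absurd (Or.inr (by rw [h]; simp) : t ∈ bad) htbad
      · exact h
    have htk : ∀ k : ℕ, k ≤ n → t ≠ (k:ℝ)/n := by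
      intro k hk h
      exact htbad (Or.inl ⟨k, Set.mem_Iic.mpr hk, h.symm⟩)
    set k := ⌊(n:ℝ)*t⌋₊ with hkdef
    have hkn : k < n := by
      rw [hkdef]
      rw [Nat.floor_lt (mul_nonneg hnR.le ht.1)]
      nlinarith
    have hkle : (k:ℝ)/n ≤ t := by
      rw [div_le_iff₀ hnR]
      have := Nat.floor_le (mul_nonneg hnR.le ht.1)
      linarith [mul_comm (n:ℝ) t]
    have hk1 : (k:ℝ)/n < t := lt_of_le_of_ne hkle (Ne.symm (htk k hkn.le))
    have hk2 : t < (k:ℝ)/n + 1/n := by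
      rw [show (k:ℝ)/n + 1/n = ((k:ℝ)+1)/n by ring, lt_div_iff₀ hnR]
      have h := Nat.lt_floor_add_one ((n:ℝ)*t)
      linarith [mul_comm (n:ℝ) t, mul_comm t (n:ℝ)]
    have hφcont : ContinuousOn (fun u => f0' u + ψ u)
        (Set.Icc ((k:ℝ)/n) ((k:ℝ)/n + 1/n)) :=
      (hf0'cont.mono (hsubp k hkn)).add (hpc k hkn).1
    have hnhds : Set.Icc ((k:ℝ)/n) ((k:ℝ)/n + 1/n) ∈ nhds t := Icc_mem_nhds hk1 hk2
    have hcontAt : ContinuousAt (fun u => f0' u + ψ u) t := hφcont.continuousAt hnhds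
    have hmeasAt : StronglyMeasurableAtFilter (fun u => f0' u + ψ u) (nhds t) :=
      ⟨_, hnhds, hφcont.aestronglyMeasurable measurableSet_Icc⟩
    have hintφ : IntervalIntegrable (fun u => f0' u + ψ u) volume 0 t :=
      (hIf0' t ht).add (hIntt t ht)
    have hD : HasDerivAt (fun s => ∫ u in (0:ℝ)..s, (f0' u + ψ u)) (f0' t + ψ t) t :=
      intervalIntegral.integral_hasDerivAt_right hintφ hmeasAt hcontAt
    refine ⟨f0' t + ψ t, ?_, ?_⟩
    · have hfne : fn n ω = fun s => f0 0 + ∫ u in (0:ℝ)..s, (f0' u + ψ u) :=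
        funext fun s => hfn'' s
      rw [hfne]
      exact hD.const_add (f0 0)
    · obtain ⟨hY1, hZ1, hYZ, hfY, hfZ⟩ := honb t ht
      have hψt : ψ t = r t • (Real.cos (2 * π * H n ω t) • Y t +
          Real.sin (2 * π * H n ω t) • Z t) := by rw [hψdef]
      set cθ := Real.cos (2 * π * H n ω t) with hcθ
      set sθ := Real.sin (2 * π * H n ω t) with hsθ
      have hw : ‖cθ • Y t + sθ • Z t‖^2 = 1 := by
        rw [norm_add_sq_real, norm_smul, norm_smul, real_inner_smul_left,
          real_inner_smul_right, hYZ, hY1, hZ1, Real.norm_eq_abs, Real.norm_eq_abs]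
        rw [mul_one, mul_one, sq_abs, sq_abs]
        rw [hcθ, hsθ]
        rw [mul_zero, mul_zero, mul_zero, add_zero]
        exact Real.cos_sq_add_sin_sq _
      have hinner : inner ℝ (f0' t) (r t • (cθ • Y t + sθ • Z t)) = (0:ℝ) := by
        rw [real_inner_smul_right, inner_add_right, real_inner_smul_right,
          real_inner_smul_right, hfY, hfZ]
        ring
      rw [hψt, norm_add_sq_real, hinner, norm_smul, Real.norm_eq_abs, mul_pow, sq_abs,
        hw, mul_one, hrsq t ht]
      ring
end
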